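/- arXiv:cs/0101032 — 8 statements merged into one kernel-verified Lean document; each statement's English description precedes it below -/
import Mathlib

section
/- Let T be a table with suppressed cell set E, and let e ∈ E. Then e is an invariant cell of T (i.e., every bounded feasible assignment of T assigns e the same value) if and only if the edge corresponding to e is not contained in any edge-simple traversable cycle of the suppressed graph H of T. -/
/-- A two-dimensional table: values, lower/upper bounds, and a set of suppressed cells. -/
structure Table (R C : Type*) where
  val : R × C → ℝ
  lo : R × C → ℝ
  hi : R × C → ℝ
  sup : Set (R × C)
  lo_le : ∀ e, lo e ≤ val e
  le_hi : ∀ e, val e ≤ hi e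
  lo_lt_hi : ∀ e, lo e < hi e

variable {R C : Type*}

/-- A bounded feasible assignment of a table. -/
def BFA [Fintype R] [Fintype C] (T : Table R C) (x : R × C → ℝ) : Prop :=
  (∀ e, e ∉ T.sup → x e = T.val e) ∧
  (∀ e ∈ T.sup, T.lo e ≤ x e ∧ x e ≤ T.hi e) ∧
  (∀ i : R, ∑ j, x (i, j) = ∑ j, T.val (i, j)) ∧
  (∀ j : C, ∑ i, x (i, j) = ∑ i, T.val (i, j))

/-- One traversable step in the mixed graph with edge set `S`: the edge of a cell `e`
may be traversed from its row endpoint to its column endpoint iff `val e < hi e`,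
and from its column endpoint to its row endpoint iff `lo e < val e`. -/
def MStep (T : Table R C) (S : Set (R × C)) (v w : R ⊕ C) : Prop :=
  ∃ e ∈ S, (T.val e < T.hi e ∧ v = Sum.inl e.1 ∧ w = Sum.inr e.2) ∨
           (T.lo e < T.val e ∧ v = Sum.inr e.2 ∧ w = Sum.inl e.1)

/-- Reachability along traversable paths in the mixed graph with edge set `S`. -/
def MReach (T : Table R C) (S : Set (R × C)) : (R ⊕ C) → (R ⊕ C) → Prop :=
  Relation.ReflTransGen (MStep T S)

/-- Mutual reachability in the mixed graph with edge set `S`. -/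
def MutReach (T : Table R C) (S : Set (R × C)) (v w : R ⊕ C) : Prop :=
  MReach T S v w ∧ MReach T S w v

/-- `D` is a strongly connected component of the mixed graph with edge set `S`:
an equivalence class of mutual reachability. -/
def IsSCC (T : Table R C) (S : Set (R × C)) (D : Set (R ⊕ C)) : Prop :=
  ∃ v, D = {w | MutReach T S v w}

/-- Direction-blind adjacency via an edge in `S`. -/
def Adj (S : Set (R × C)) (v w : R ⊕ C) : Prop :=
  ∃ e ∈ S, (v = Sum.inl e.1 ∧ w = Sum.inr e.2) ∨ (v = Sum.inr e.2 ∧ w = Sum.inl e.1)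

/-- Direction-blind connectivity via edges in `S`. -/
def Conn (S : Set (R × C)) : (R ⊕ C) → (R ⊕ C) → Prop :=
  Relation.ReflTransGen (Adj S)

/-- `D` is a connected component of the (direction-blind) graph with edge set `S`. -/
def IsCC (S : Set (R × C)) (D : Set (R ⊕ C)) : Prop :=
  ∃ v, D = {w | Conn S v w}

/-- The edges of `S` with both endpoints in the vertex set `D`. -/
def EdgesIn (S : Set (R × C)) (D : Set (R ⊕ C)) : Set (R × C) :=
  {e | e ∈ S ∧ Sum.inl e.1 ∈ D ∧ Sum.inr e.2 ∈ D}

/-- All vertices of `D` are joined by direction-blind paths using edges in `S`. -/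
def ConnectedOn (S : Set (R × C)) (D : Set (R ⊕ C)) : Prop :=
  ∀ v ∈ D, ∀ w ∈ D, Conn S v w

/-- The edge of cell `e` lies on an edge-simple traversable cycle of the mixed graph
with edge set `T.sup`.  The cycle visits rows `r 0, …, r (k-1)` and columns
`c 0, …, c (k-1)`, traversing edge `(r t, c t)` from its row to its column
(which requires `val < hi`) and edge `(r (t+1), c t)` from its column to its row
(which requires `lo < val`); all `2k` edges are distinct. -/
def InTravCycle [Fintype R] [Fintype C] (T : Table R C) (e : R × C) : Prop :=
  ∃ (k : ℕ) (r : ℕ → R) (c : ℕ → C),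
    0 < k ∧ r k = r 0 ∧
    (∀ t < k, (r t, c t) ∈ T.sup ∧ T.val (r t, c t) < T.hi (r t, c t) ∧
      (r (t + 1), c t) ∈ T.sup ∧ T.lo (r (t + 1), c t) < T.val (r (t + 1), c t)) ∧
    (∀ s < k, ∀ t < k, s ≠ t → (r s, c s) ≠ (r t, c t)) ∧
    (∀ s < k, ∀ t < k, s ≠ t → (r (s + 1), c s) ≠ (r (t + 1), c t)) ∧
    (∀ s < k, ∀ t < k, (r s, c s) ≠ (r (t + 1), c t)) ∧
    (∃ t < k, e = (r t, c t) ∨ e = (r (t + 1), c t))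

/-!
If a feasible assignment `x` differs from `a` at `e`, then `d = x - a` has zero row and column
sums, is positive only where `a < u` and negative only where `l < a`. In the graph that crosses
positive cells from row to column and negative ones from column to row, the mass leaving the
set of vertices reachable from an edge equals the mass entering it, so every edge of the support
of `d` closes up into a cycle; a shortest one visits no column twice and is therefore
edge-simple. Conversely, adding `+ε` on the row-to-column edges of a traversable cycle and `-ε`
on the others keeps all margins, and keeps the bounds for small `ε > 0`.
-/

open Finset Relation

theorem Relation.ReflTransGen.exists_injOn_path {α : Type*} {r : α → α → Prop} {a b : α}
    (h : ReflTransGen r a b) :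
    ∃ (n : ℕ) (p : ℕ → α), p 0 = a ∧ p n = b ∧ (∀ t < n, r (p t) (p (t + 1))) ∧
      Set.InjOn p (Set.Iic n) := by
  induction h using Relation.ReflTransGen.head_induction_on with
  | refl => exact ⟨0, fun _ => b, rfl, rfl, by simp, fun s _ t _ _ => by simp_all⟩
  | @head a a' haa' _ ih =>
    obtain ⟨n, p, hp0, hpn, hstep, hinj⟩ := ih
    by_cases hmem : ∃ k ≤ n, p k = a
    · -- `a` already lies on the path: drop the part before it
      obtain ⟨k, hkn, hk⟩ := hmem
      refine ⟨n - k, fun t => p (t + k), by simpa,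
        show p (n - k + k) = b by rwa [Nat.sub_add_cancel hkn], fun t ht => ?_,
        fun s hs t ht hst => ?_⟩
      · simpa only [Nat.add_right_comm] using hstep (t + k) (by omega)
      · simp only [Set.mem_Iic] at hs ht
        have := hinj (show s + k ≤ n by omega) (show t + k ≤ n by omega) hst
        omega
    · push Not at hmem
      refine ⟨n + 1, fun t => if t = 0 then a else p (t - 1), by simp, by simpa, ?_, ?_⟩
      · rintro (_ | t) ht
        · simpa [hp0] using haa'
        · simpa using hstep t (by omega)
      · rintro (_ | s) hs (_ | t) ht hst <;> simp only [Set.mem_Iic] at hs ht <;>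
          simp only [add_tsub_cancel_right, Nat.add_eq_zero_iff, one_ne_zero, and_false,
            if_true, if_false] at hst
        · rfl
        · exact absurd hst.symm (hmem t (by omega))
        · exact absurd hst (hmem s (by omega))
        · rw [hinj (show s ≤ n by omega) (show t ≤ n by omega) hst]

/-- Two steps `j → i → j'` of the support graph of `d`, in which a cell is traversed from its
row to its column when positive and from its column to its row when negative. -/
def ColStep (d : R × C → ℝ) (j j' : C) : Prop :=
  ∃ i, d (i, j) < 0 ∧ 0 < d (i, j')

theorem colStep_neg {d : R × C → ℝ} {j j' : C} : ColStep (-d) j j' ↔ ColStep d j' j := by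
  simp only [ColStep, Pi.neg_apply, neg_neg_iff_pos, neg_pos, and_comm]

/-- A closed walk `r 0 → c 0 → r 1 → ⋯ → c (k - 1) → r k = r 0` in the support graph of `d`
visiting no column twice. -/
def IsSignCycle (d : R × C → ℝ) (k : ℕ) (r : ℕ → R) (c : ℕ → C) : Prop :=
  0 < k ∧ r k = r 0 ∧ (∀ t < k, 0 < d (r t, c t) ∧ d (r (t + 1), c t) < 0) ∧
    Set.InjOn c (Set.Iio k)

theorem exists_isSignCycle_of_colStep_path {d : R × C → ℝ} {m : ℕ} {c : ℕ → C} {i : R}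
    (hstep : ∀ t < m, ColStep d (c t) (c (t + 1))) (hc : Set.InjOn c (Set.Iic m))
    (h0 : 0 < d (i, c 0)) (hm : d (i, c m) < 0) :
    ∃ r, IsSignCycle d (m + 1) r c ∧ r 0 = i := by
  -- `r t` is a row linking `c (t - 1)` to `c t`, and `r 0 = r (m + 1) = i` closes the walk
  have hrow : ∀ t, ∃ i', (t = 0 ∨ m < t → i' = i) ∧
      (0 < t → t ≤ m → d (i', c (t - 1)) < 0 ∧ 0 < d (i', c t)) := by
    intro t
    by_cases ht : 0 < t ∧ t ≤ m
    · obtain ⟨i', h⟩ := hstep (t - 1) (by omega)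
      refine ⟨i', fun h' => by omega, fun _ _ => ?_⟩
      rwa [Nat.sub_add_cancel ht.1] at h
    · exact ⟨i, fun _ => rfl, fun h1 h2 => absurd ⟨h1, h2⟩ ht⟩
  choose r hr using hrow
  have hr0 : r 0 = i := (hr 0).1 (Or.inl rfl)
  have hrm : r (m + 1) = i := (hr _).1 (Or.inr m.lt_succ_self)
  refine ⟨r, ⟨m.succ_pos, hrm.trans hr0.symm, fun t ht => ⟨?_, ?_⟩, ?_⟩, hr0⟩
  · rcases Nat.eq_zero_or_pos t with rfl | htpos
    · rwa [hr0]
    · exact ((hr t).2 htpos (by omega)).2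
  · rcases (show t < m ∨ t = m by omega) with htm | rfl
    · simpa using ((hr (t + 1)).2 t.succ_pos htm).1
    · rwa [hrm]
  · exact hc.mono fun t ht => Nat.lt_succ_iff.mp ht

section Fintype

variable [Fintype R] [Fintype C]

def HasZeroMargins (d : R × C → ℝ) : Prop :=
  (∀ i, ∑ j, d (i, j) = 0) ∧ ∀ j, ∑ i, d (i, j) = 0

namespace HasZeroMargins

variable {d : R × C → ℝ}

theorem neg (hd : HasZeroMargins d) : HasZeroMargins (-d) :=
  ⟨fun i => by simp [hd.1 i], fun j => by simp [hd.2 j]⟩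

theorem smul (hd : HasZeroMargins d) (a : ℝ) : HasZeroMargins (a • d) :=
  ⟨fun i => by simp [← mul_sum, hd.1 i], fun j => by simp [← mul_sum, hd.2 j]⟩

theorem sum_cut_eq [DecidableEq R] [DecidableEq C] (hd : HasZeroMargins d) (S : Finset R)
    (A : Finset C) :
    ∑ i ∈ S, ∑ j ∈ Aᶜ, d (i, j) = ∑ j ∈ A, ∑ i ∈ Sᶜ, d (i, j) := by
  have hS : ∑ i ∈ S, ∑ j ∈ Aᶜ, d (i, j) = -∑ i ∈ S, ∑ j ∈ A, d (i, j) := by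
    rw [eq_neg_iff_add_eq_zero, ← sum_add_distrib]
    exact sum_eq_zero fun i _ => by rw [sum_compl_add_sum, hd.1 i]
  have hA : ∑ j ∈ A, ∑ i ∈ Sᶜ, d (i, j) = -∑ j ∈ A, ∑ i ∈ S, d (i, j) := by
    rw [eq_neg_iff_add_eq_zero, ← sum_add_distrib]
    exact sum_eq_zero fun j _ => by rw [sum_compl_add_sum, hd.2 j]
  rw [hS, hA, sum_comm]

theorem exists_colStep_reach_neg (hd : HasZeroMargins d) {i : R} {j : C} (hij : 0 < d (i, j)) :
    ∃ j', ReflTransGen (ColStep d) j j' ∧ d (i, j') < 0 := by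
  classical
  by_contra! hnone
  set A := univ.filter (ReflTransGen (ColStep d) j)
  set S := univ.filter fun i' => ∃ j' ∈ A, d (i', j') < 0
  have hout : ∀ i' ∈ S, ∀ j' ∈ Aᶜ, d (i', j') ≤ 0 := by
    intro i' hi' j' hj'
    simp only [S, A, mem_filter, mem_univ, true_and] at hi' hj'
    obtain ⟨j'', hj'', hneg⟩ := hi'
    by_contra! hpos
    simp only [mem_compl, mem_filter, mem_univ, true_and] at hj'
    exact hj' (hj''.tail ⟨i', hneg, hpos⟩)
  have hin : ∀ j' ∈ A, ∀ i' ∈ Sᶜ, 0 ≤ d (i', j') := by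
    intro j' hj' i' hi'
    by_contra! hneg
    simp only [S, mem_compl, mem_filter, mem_univ, true_and, not_exists, not_and, not_lt] at hi'
    exact (hneg.trans_le (hi' j' hj')).false
  have hiS : i ∈ Sᶜ := by simpa [S, A] using hnone
  have hjA : j ∈ A := by simp [A, ReflTransGen.refl]
  have hinflow : 0 < ∑ j' ∈ A, ∑ i' ∈ Sᶜ, d (i', j') := calc
    0 < d (i, j) := hij
    _ ≤ ∑ i' ∈ Sᶜ, d (i', j) := single_le_sum (hin j hjA) hiS
    _ ≤ ∑ j' ∈ A, ∑ i' ∈ Sᶜ, d (i', j') :=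
      single_le_sum (f := fun j' => ∑ i' ∈ Sᶜ, d (i', j'))
        (fun j' hj' => sum_nonneg (hin j' hj')) hjA
  have houtflow : ∑ i' ∈ S, ∑ j' ∈ Aᶜ, d (i', j') ≤ 0 :=
    sum_nonpos fun i' hi' => sum_nonpos (hout i' hi')
  linarith [hd.sum_cut_eq S A]

end HasZeroMargins
theorem HasZeroMargins.exists_isSignCycle {d : R × C → ℝ}
    (hd : HasZeroMargins d) {e : R × C} (he : d e ≠ 0) :
    ∃ k r c, IsSignCycle d k r c ∧ ∃ t < k, e = (r t, c t) ∨ e = (r (t + 1), c t) := by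
  rcases he.lt_or_gt with hneg | hpos
  · obtain ⟨j, hreach, hj⟩ :=
      hd.neg.exists_colStep_reach_neg (i := e.1) (j := e.2) (by simpa using hneg)
    have hreach' : ReflTransGen (ColStep d) j e.2 :=
      reflTransGen_swap.mp (ReflTransGen.mono (fun _ _ h => colStep_neg.mp h) _ _ hreach)
    obtain ⟨m, c, hc0, hcm, hstep, hinj⟩ := hreach'.exists_injOn_path
    obtain ⟨r, hr, hr0⟩ := exists_isSignCycle_of_colStep_path hstep hinj
      (by rw [hc0]; simpa using hj) (by rwa [hcm])
    exact ⟨m + 1, r, c, hr, m, m.lt_succ_self, Or.inr (by rw [hr.2.1, hr0, hcm])⟩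
  · obtain ⟨j, hreach, hj⟩ := hd.exists_colStep_reach_neg (i := e.1) (j := e.2) hpos
    obtain ⟨m, c, hc0, hcm, hstep, hinj⟩ := hreach.exists_injOn_path
    obtain ⟨r, hr, hr0⟩ := exists_isSignCycle_of_colStep_path hstep hinj
      (by rwa [hc0]) (by rwa [hcm])
    exact ⟨m + 1, r, c, hr, 0, m.succ_pos, Or.inl (by rw [hr0, hc0])⟩

theorem IsSignCycle.inTravCycle {T : Table R C} {d : R × C → ℝ}
    {k : ℕ} {r : ℕ → R} {c : ℕ → C} (h : IsSignCycle d k r c)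
    (hpos : ∀ f, 0 < d f → f ∈ T.sup ∧ T.val f < T.hi f)
    (hneg : ∀ f, d f < 0 → f ∈ T.sup ∧ T.lo f < T.val f) {e : R × C}
    (he : ∃ t < k, e = (r t, c t) ∨ e = (r (t + 1), c t)) : InTravCycle T e := by
  obtain ⟨hk, hrk, hsign, hinj⟩ := h
  refine ⟨k, r, c, hk, hrk, fun t ht => ?_, ?_, ?_, ?_, he⟩
  · obtain ⟨h1, h2⟩ := hsign t ht
    exact ⟨(hpos _ h1).1, (hpos _ h1).2, (hneg _ h2).1, (hneg _ h2).2⟩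
  · exact fun s hs t ht hst heq => hst (hinj hs ht (congrArg Prod.snd heq))
  · exact fun s hs t ht hst heq => hst (hinj hs ht (congrArg Prod.snd heq))
  · intro s hs t ht heq
    have := (hsign s hs).1
    rw [heq] at this
    linarith [(hsign t ht).2]

theorem BFA.hasZeroMargins_sub {T : Table R C} {x : R × C → ℝ}
    (hx : BFA T x) : HasZeroMargins (x - T.val) :=
  ⟨fun i => by simp [sum_sub_distrib, hx.2.2.1 i],
    fun j => by simp [sum_sub_distrib, hx.2.2.2 j]⟩

theorem BFA.inTravCycle_of_ne {T : Table R C} {x : R × C → ℝ}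
    (hx : BFA T x) {e : R × C} (hne : x e ≠ T.val e) : InTravCycle T e := by
  have hsup : ∀ f, (x - T.val) f ≠ 0 → f ∈ T.sup := fun f hf =>
    by_contra fun h => hf (by simp [hx.1 f h])
  obtain ⟨k, r, c, hcyc, he⟩ := hx.hasZeroMargins_sub.exists_isSignCycle (sub_ne_zero.2 hne)
  refine hcyc.inTravCycle (fun f hf => ?_) (fun f hf => ?_) he
  · have hf' := hsup f hf.ne'
    simp only [Pi.sub_apply, sub_pos] at hf
    exact ⟨hf', hf.trans_le (hx.2.1 f hf').2⟩
  · have hf' := hsup f hf.ne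
    simp only [Pi.sub_apply, sub_neg] at hf
    exact ⟨hf', (hx.2.1 f hf').1.trans_lt hf⟩

theorem bfa_val (T : Table R C) : BFA T T.val :=
  ⟨fun _ _ => rfl, fun f _ => ⟨T.lo_le f, T.le_hi f⟩, fun _ => rfl, fun _ => rfl⟩

theorem bfa_val_add {T : Table R C} {d : R × C → ℝ}
    (hd : HasZeroMargins d) (hoff : ∀ f ∉ T.sup, d f = 0)
    (hbd : ∀ f ∈ T.sup, T.lo f ≤ T.val f + d f ∧ T.val f + d f ≤ T.hi f) :
    BFA T (T.val + d) :=
  ⟨fun f hf => by simp [hoff f hf], hbd, fun i => by simp [sum_add_distrib, hd.1 i],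
    fun j => by simp [sum_add_distrib, hd.2 j]⟩

end Fintype

section CycleSignal

variable [DecidableEq R] [DecidableEq C] {k : ℕ} {r : ℕ → R} {c : ℕ → C}

def cycleSignal (k : ℕ) (r : ℕ → R) (c : ℕ → C) (f : R × C) : ℝ :=
  ∑ t ∈ range k, ((if f = (r t, c t) then 1 else 0) - if f = (r (t + 1), c t) then 1 else 0)

theorem hasZeroMargins_cycleSignal [Fintype R] [Fintype C] (hr : r k = r 0) :
    HasZeroMargins (cycleSignal k r c) := by
  refine ⟨fun i => ?_, fun j => ?_⟩
  · simp only [cycleSignal]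
    rw [sum_comm]
    simp only [Prod.mk.injEq, ite_and, sum_sub_distrib, sum_ite_irrel, sum_ite_eq', mem_univ,
      ↓reduceIte, sum_const_zero]
    rw [← sum_sub_distrib, sum_range_sub' (fun t => if i = r t then (1 : ℝ) else 0), hr, sub_self]
  · simp only [cycleSignal]
    rw [sum_comm]
    simp only [Prod.mk.injEq, ite_and, sum_sub_distrib, sum_ite_eq', mem_univ, ↓reduceIte,
      sub_self, sum_const_zero]

theorem sum_range_ite_eq_one {α : Type*} [DecidableEq α] {g : ℕ → α}
    (hg : ∀ s < k, ∀ t < k, s ≠ t → g s ≠ g t) {t : ℕ} (ht : t < k) :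
    ∑ s ∈ range k, (if g t = g s then (1 : ℝ) else 0) = 1 := by
  rw [sum_eq_single_of_mem t (mem_range.2 ht)
    fun s hs hst => if_neg (hg t ht s (mem_range.1 hs) hst.symm), if_pos rfl]

theorem cycleSignal_eq_zero {f : R × C} (h₁ : ∀ t < k, f ≠ (r t, c t))
    (h₂ : ∀ t < k, f ≠ (r (t + 1), c t)) : cycleSignal k r c f = 0 :=
  sum_eq_zero fun t ht => by
    rw [if_neg (h₁ t (mem_range.1 ht)), if_neg (h₂ t (mem_range.1 ht)), sub_self]

theorem cycleSignal_fwd (hfwd : ∀ s < k, ∀ t < k, s ≠ t → (r s, c s) ≠ (r t, c t))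
    (hfb : ∀ s < k, ∀ t < k, (r s, c s) ≠ (r (t + 1), c t)) {t : ℕ} (ht : t < k) :
    cycleSignal k r c (r t, c t) = 1 := by
  rw [cycleSignal, sum_sub_distrib, sum_range_ite_eq_one (g := fun t => (r t, c t)) hfwd ht,
    sum_eq_zero fun s hs => if_neg (hfb t ht s (mem_range.1 hs)), sub_zero]

theorem cycleSignal_bwd (hbwd : ∀ s < k, ∀ t < k, s ≠ t → (r (s + 1), c s) ≠ (r (t + 1), c t))
    (hfb : ∀ s < k, ∀ t < k, (r s, c s) ≠ (r (t + 1), c t)) {t : ℕ} (ht : t < k) :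
    cycleSignal k r c (r (t + 1), c t) = -1 := by
  rw [cycleSignal, sum_sub_distrib,
    sum_range_ite_eq_one (g := fun t => (r (t + 1), c t)) hbwd ht,
    sum_eq_zero fun s hs => if_neg fun h => hfb s (mem_range.1 hs) t ht h.symm, zero_sub]

end CycleSignal
open Filter Topology in
theorem InTravCycle.exists_bfa_ne [Fintype R] [Fintype C] {T : Table R C} {e : R × C}
    (h : InTravCycle T e) : ∃ x, BFA T x ∧ x e ≠ T.val e := by
  classical
  obtain ⟨k, r, c, -, hrk, hcells, hfwd, hbwd, hfb, t₀, ht₀, he⟩ := h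
  set slack : ℕ → ℝ := fun t =>
    min (T.hi (r t, c t) - T.val (r t, c t)) (T.val (r (t + 1), c t) - T.lo (r (t + 1), c t))
  have hslack : ∀ t ∈ range k, 0 < slack t := fun t ht => by
    obtain ⟨-, h₁, -, h₂⟩ := hcells t (mem_range.1 ht)
    exact lt_min (sub_pos.2 h₁) (sub_pos.2 h₂)
  have hsmall : ∀ᶠ ε in 𝓝[>] (0 : ℝ), 0 < ε ∧ ∀ t ∈ range k, ε < slack t :=
    eventually_mem_nhdsWithin.and (eventually_nhdsWithin_of_eventually_nhds
      ((eventually_all_finset _).2 fun t ht => eventually_lt_nhds (hslack t ht)))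
  obtain ⟨ε, hε, hεs⟩ := hsmall.exists
  have hεle : ∀ t < k, ε ≤ T.hi (r t, c t) - T.val (r t, c t) ∧
      ε ≤ T.val (r (t + 1), c t) - T.lo (r (t + 1), c t) :=
    fun t ht => le_min_iff.mp (hεs t (mem_range.2 ht)).le
  refine ⟨T.val + ε • cycleSignal k r c,
    bfa_val_add ((hasZeroMargins_cycleSignal hrk).smul ε) (fun f hf => ?_) (fun f _ => ?_), ?_⟩
  · rw [Pi.smul_apply, cycleSignal_eq_zero (f := f)
      (fun t ht h => hf (h ▸ (hcells t ht).1)) (fun t ht h => hf (h ▸ (hcells t ht).2.2.1)),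
      smul_zero]
  · by_cases h₁ : ∃ t < k, f = (r t, c t)
    · obtain ⟨t, ht, rfl⟩ := h₁
      rw [Pi.smul_apply, cycleSignal_fwd hfwd hfb ht, smul_eq_mul, mul_one]
      constructor <;> linarith [T.lo_le (r t, c t), (hεle t ht).1]
    by_cases h₂ : ∃ t < k, f = (r (t + 1), c t)
    · obtain ⟨t, ht, rfl⟩ := h₂
      rw [Pi.smul_apply, cycleSignal_bwd hbwd hfb ht, smul_eq_mul, mul_neg_one]
      constructor <;> linarith [T.le_hi (r (t + 1), c t), (hεle t ht).2]
    push Not at h₁ h₂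
    rw [Pi.smul_apply, cycleSignal_eq_zero h₁ h₂, smul_zero, add_zero]
    exact ⟨T.lo_le f, T.le_hi f⟩
  · rcases he with rfl | rfl
    · simp [cycleSignal_fwd hfwd hfb ht₀, hε.ne']
    · simp [cycleSignal_bwd hbwd hfb ht₀, hε.ne']

theorem stmt0_general [Fintype R] [Fintype C]
    (T : Table R C) (e : R × C) :
    (∀ x y, BFA T x → BFA T y → x e = y e) ↔ ¬ InTravCycle T e := by
  refine ⟨fun hinv hcyc => ?_, fun hcyc x y hx hy => ?_⟩
  · obtain ⟨x, hx, hne⟩ := hcyc.exists_bfa_ne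
    exact hne (hinv x T.val hx (bfa_val T))
  · have hfixed : ∀ z, BFA T z → z e = T.val e := fun z hz =>
      by_contra fun hne => hcyc (hz.inTravCycle_of_ne hne)
    rw [hfixed x hx, hfixed y hy]

/-- A suppressed cell is an invariant cell iff it is not contained in any
edge-simple traversable cycle of the suppressed graph. -/
theorem stmt0 [Fintype R] [Fintype C] [Nonempty R] [Nonempty C]
    (T : Table R C) (e : R × C) (he : e ∈ T.sup) :
    (∀ x y, BFA T x → BFA T y → x e = y e) ↔ ¬ InTravCycle T e :=
  stmt0_general T e
end

section
/- Let T be a table with suppressed cell set E and suppressed graph H, let D be a strongly connected component of H, and let Y be a minimal edge cut of D. Then there exist coefficients c : E → ℝ with {e ∈ E : c(e) ≠ 0} = Y such that the linear form x ↦ Σ_{e∈E} c(e)·x(e) takes the same value at every bounded feasible assignment x of T (i.e., T has a linear invariant whose effective area is exactly Y). -/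
variable {R C : Type*}

/-! A feasible `x` differs from the table values `a` by a circulation, so
`∑ e, (φ i - φ j) * (x e - a e) = 0` for every potential `φ` on the vertices (`e = (i, j)`).
If `φ` is the indicator of a vertex set closed under traversable steps, every term is `≤ 0`, so
each cell whose edge leaves that set is frozen at its table value; in particular so is every
suppressed edge with exactly one endpoint in a strongly connected component `D`. By minimality,
each edge of `Y` has exactly one endpoint in the part `A` of `D` reached from a fixed vertex of `D`
without using `Y`, and no other edge inside `D` crosses `A`. Hence the potential `1_A`, restricted
to `Y`, is an invariant: on every other edge its difference vanishes or the cell is frozen. -/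

open Finset

section Graph

variable {S S' : Set (R × C)}

lemma Adj.mono (h : S ⊆ S') {v w : R ⊕ C} (hvw : Adj S v w) : Adj S' v w := by
  obtain ⟨e, he, hvw⟩ := hvw
  exact ⟨e, h he, hvw⟩

lemma Conn.mono (h : S ⊆ S') {v w : R ⊕ C} (hvw : Conn S v w) : Conn S' v w :=
  Relation.ReflTransGen.mono (fun _ _ => Adj.mono h) v w hvw

lemma conn_inl_iff_conn_inr {e : R × C} (he : e ∈ S) (v : R ⊕ C) :
    Conn S v (Sum.inl e.1) ↔ Conn S v (Sum.inr e.2) :=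
  ⟨fun h => h.tail ⟨e, he, Or.inl ⟨rfl, rfl⟩⟩, fun h => h.tail ⟨e, he, Or.inr ⟨rfl, rfl⟩⟩⟩

lemma Conn.of_insert {e : R × C} {v w : R ⊕ C} (h : Conn (insert e S) v w) :
    Conn S v w ∨ ¬ (Conn S v (Sum.inl e.1) ↔ Conn S v (Sum.inr e.2)) := by
  induction h with
  | refl => exact Or.inl .refl
  | @tail u u' _ step ih =>
    rcases ih with hvu | hcross
    · obtain ⟨f, hf, hor⟩ := step
      rcases Set.mem_insert_iff.1 hf with rfl | hfS
      · by_cases hvu' : Conn S v u'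
        · exact Or.inl hvu'
        · rcases hor with ⟨rfl, rfl⟩ | ⟨rfl, rfl⟩ <;> exact Or.inr (by tauto)
      · exact Or.inl (hvu.tail ⟨f, hfS, hor⟩)
    · exact Or.inr hcross

lemma Conn.mem_of_subset_edgesIn {E : Set (R × C)} {D : Set (R ⊕ C)} (hS : S ⊆ EdgesIn E D)
    {v w : R ⊕ C} (h : Conn S v w) (hv : v ∈ D) : w ∈ D := by
  induction h with
  | refl => exact hv
  | tail _ step _ =>
    obtain ⟨e, he, ⟨-, rfl⟩ | ⟨-, rfl⟩⟩ := step
    · exact (hS he).2.2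
    · exact (hS he).2.1

lemma not_conn_inl_iff_conn_inr_of_minimal_cut {D : Set (R ⊕ C)} {Y : Set (R × C)}
    {v₀ w₀ : R ⊕ C} (hv₀ : v₀ ∈ D) (hw₀ : w₀ ∈ D) (hv₀w₀ : ¬ Conn (S \ Y) v₀ w₀)
    (hmin : ∀ Y' ⊂ Y, ConnectedOn (S \ Y') D) {e : R × C} (he : e ∈ Y) :
    ¬ (Conn (S \ Y) v₀ (Sum.inl e.1) ↔ Conn (S \ Y) v₀ (Sum.inr e.2)) := by
  have hsub : S \ (Y \ {e}) ⊆ insert e (S \ Y) := by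
    intro f ⟨hfS, hfY⟩
    by_cases hfe : f = e
    · exact Or.inl hfe
    · exact Or.inr ⟨hfS, fun hf => hfY ⟨hf, hfe⟩⟩
  have hconn := (hmin _ (Set.sdiff_singleton_ssubset.2 he) v₀ hv₀ w₀ hw₀).mono hsub
  exact hconn.of_insert.resolve_left hv₀w₀

end Graph

def IsForwardClosed (T : Table R C) (S : Set (R × C)) (U : Set (R ⊕ C)) : Prop :=
  ∀ v ∈ U, ∀ w, MStep T S v w → w ∈ U

section Closed

variable {T : Table R C} {S : Set (R × C)}

lemma isForwardClosed_reach_from (v : R ⊕ C) : IsForwardClosed T S {w | MReach T S v w} :=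
  fun _ hu _ huw => Relation.ReflTransGen.tail hu huw

lemma isForwardClosed_not_reach_to (v : R ⊕ C) :
    IsForwardClosed T S {w | ¬ MReach T S w v} :=
  fun _ hu _ huw hw => hu (Relation.ReflTransGen.head huw hw)

lemma IsSCC.exists_isForwardClosed_separating {D : Set (R ⊕ C)} (hD : IsSCC T S D)
    {p q : R ⊕ C} (hp : p ∈ D) (hq : q ∉ D) :
    ∃ U, IsForwardClosed T S U ∧ ¬ (p ∈ U ↔ q ∈ U) := by
  obtain ⟨v, rfl⟩ := hD
  by_cases hvq : MReach T S v q
  · have hqv : ¬ MReach T S q v := fun hqv => hq ⟨hvq, hqv⟩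
    exact ⟨_, isForwardClosed_not_reach_to v, fun h => h.2 hqv hp.2⟩
  · exact ⟨_, isForwardClosed_reach_from v, fun h => hvq (h.1 hp.1)⟩

end Closed

lemma indicator_one_sub_indicator_one_eq_zero_iff {α : Type*} (A : Set α) (p q : α) :
    A.indicator (1 : α → ℝ) p - A.indicator 1 q = 0 ↔ (p ∈ A ↔ q ∈ A) := by
  by_cases hp : p ∈ A <;> by_cases hq : q ∈ A <;> simp [hp, hq]

section Feasible

variable [Fintype R] [Fintype C] {T : Table R C} {x : R × C → ℝ}

lemma sum_potential_mul_sub_eq_zero {y : R × C → ℝ}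
    (hrow : ∀ i, ∑ j, x (i, j) = ∑ j, y (i, j)) (hcol : ∀ j, ∑ i, x (i, j) = ∑ i, y (i, j))
    (φ : R ⊕ C → ℝ) :
    ∑ e : R × C, (φ (Sum.inl e.1) - φ (Sum.inr e.2)) * (x e - y e) = 0 := by
  have hrow' : ∑ e : R × C, φ (Sum.inl e.1) * (x e - y e) = 0 := by
    rw [Fintype.sum_prod_type]
    refine sum_eq_zero fun i _ => ?_
    dsimp only
    rw [← mul_sum, sum_sub_distrib, hrow i, sub_self, mul_zero]
  have hcol' : ∑ e : R × C, φ (Sum.inr e.2) * (x e - y e) = 0 := by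
    rw [Fintype.sum_prod_type_right]
    refine sum_eq_zero fun j _ => ?_
    dsimp only
    rw [← mul_sum, sum_sub_distrib, hcol j, sub_self, mul_zero]
  simp_rw [sub_mul _ _ (x _ - y _)]
  rw [sum_sub_distrib, hrow', hcol', sub_self]

lemma BFA.indicator_sub_mul_sub_nonpos (hx : BFA T x) {U : Set (R ⊕ C)}
    (hU : IsForwardClosed T T.sup U) (e : R × C) :
    (U.indicator 1 (Sum.inl e.1) - U.indicator 1 (Sum.inr e.2)) * (x e - T.val e) ≤ 0 := by
  by_cases he : e ∈ T.sup
  · obtain ⟨hlo, hhi⟩ := hx.2.1 e he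
    by_cases h1 : Sum.inl e.1 ∈ U <;> by_cases h2 : Sum.inr e.2 ∈ U <;>
      simp only [h1, h2, not_false_eq_true, Set.indicator_of_mem, Set.indicator_of_notMem,
        Pi.one_apply, sub_self, sub_zero, zero_sub, zero_mul, one_mul, neg_mul, neg_sub,
        tsub_le_iff_right, zero_add, le_refl]
    · have : ¬ T.val e < T.hi e := fun hlt => h2 (hU _ h1 _ ⟨e, he, Or.inl ⟨hlt, rfl, rfl⟩⟩)
      linarith [T.le_hi e]
    · have : ¬ T.lo e < T.val e := fun hlt => h1 (hU _ h2 _ ⟨e, he, Or.inr ⟨hlt, rfl, rfl⟩⟩)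
      linarith [T.lo_le e]
  · rw [hx.1 e he, sub_self, mul_zero]

lemma BFA.eq_val_of_isForwardClosed (hx : BFA T x) {U : Set (R ⊕ C)}
    (hU : IsForwardClosed T T.sup U) {e : R × C}
    (he : ¬ (Sum.inl e.1 ∈ U ↔ Sum.inr e.2 ∈ U)) : x e = T.val e := by
  have hterm := (sum_eq_zero_iff_of_nonpos fun f _ => hx.indicator_sub_mul_sub_nonpos hU f).1
    (sum_potential_mul_sub_eq_zero hx.2.2.1 hx.2.2.2 _) e (mem_univ e)
  rcases mul_eq_zero.1 hterm with h | h
  · exact absurd ((indicator_one_sub_indicator_one_eq_zero_iff U _ _).1 h) he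
  · exact sub_eq_zero.1 h

lemma BFA.eq_val_of_isSCC (hx : BFA T x) {D : Set (R ⊕ C)} (hD : IsSCC T T.sup D)
    {e : R × C} (he : ¬ (Sum.inl e.1 ∈ D ↔ Sum.inr e.2 ∈ D)) : x e = T.val e := by
  by_cases h1 : Sum.inl e.1 ∈ D
  · obtain ⟨U, hU, hsep⟩ := hD.exists_isForwardClosed_separating (q := Sum.inr e.2) h1 (by tauto)
    exact hx.eq_val_of_isForwardClosed hU hsep
  · obtain ⟨U, hU, hsep⟩ := hD.exists_isForwardClosed_separating (p := Sum.inr e.2) (by tauto) h1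
    exact hx.eq_val_of_isForwardClosed hU (by tauto)

lemma BFA.indicator_sub_mul_sub_eq_zero (hx : BFA T x) {D A : Set (R ⊕ C)}
    (hD : IsSCC T T.sup D) (hAD : A ⊆ D) {Y : Set (R × C)}
    (hA : ∀ e ∈ EdgesIn T.sup D \ Y, (Sum.inl e.1 ∈ A ↔ Sum.inr e.2 ∈ A))
    {e : R × C} (he : e ∉ Y) :
    (A.indicator 1 (Sum.inl e.1) - A.indicator 1 (Sum.inr e.2)) * (x e - T.val e) = 0 := by
  by_cases hiff : Sum.inl e.1 ∈ A ↔ Sum.inr e.2 ∈ A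
  · rw [(indicator_one_sub_indicator_one_eq_zero_iff A _ _).2 hiff, zero_mul]
  suffices x e = T.val e by rw [this, sub_self, mul_zero]
  by_cases hsup : e ∈ T.sup
  · refine hx.eq_val_of_isSCC hD fun hD' => hiff (hA e ⟨⟨hsup, ?_⟩, he⟩)
    have := @hAD (Sum.inl e.1)
    have := @hAD (Sum.inr e.2)
    tauto
  · exact hx.1 e hsup

lemma BFA.sum_indicator_mul_eq (hx : BFA T x) (φ : R ⊕ C → ℝ) (Y : Set (R × C))
    (hY : ∀ e ∉ Y, (φ (Sum.inl e.1) - φ (Sum.inr e.2)) * (x e - T.val e) = 0) :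
    ∑ e, Y.indicator (fun e => φ (Sum.inl e.1) - φ (Sum.inr e.2)) e * x e =
      ∑ e, Y.indicator (fun e => φ (Sum.inl e.1) - φ (Sum.inr e.2)) e * T.val e := by
  rw [← sub_eq_zero, ← sum_sub_distrib, ← sum_potential_mul_sub_eq_zero hx.2.2.1 hx.2.2.2 φ]
  refine sum_congr rfl fun e _ => ?_
  by_cases he : e ∈ Y
  · rw [Set.indicator_of_mem he, mul_sub]
  · rw [Set.indicator_of_notMem he, hY e he]
    ring

end Feasible

theorem stmt1_general [Fintype R] [Fintype C]
    (T : Table R C) (D : Set (R ⊕ C)) (hD : IsSCC T T.sup D)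
    (Y : Set (R × C))
    (hcut : ¬ ConnectedOn (EdgesIn T.sup D \ Y) D)
    (hmin : ∀ Y' ⊂ Y, ConnectedOn (EdgesIn T.sup D \ Y') D) :
    ∃ c : R × C → ℝ, {e | c e ≠ 0} = Y ∧
      ∃ ρ : ℝ, ∀ x, BFA T x → ∑ e : R × C, c e * x e = ρ := by
  obtain ⟨v₀, hv₀, w₀, hw₀, hv₀w₀⟩ :
      ∃ v₀ ∈ D, ∃ w₀ ∈ D, ¬ Conn (EdgesIn T.sup D \ Y) v₀ w₀ := by
    simpa only [ConnectedOn, not_forall, exists_prop] using hcut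
  set A := {w | Conn (EdgesIn T.sup D \ Y) v₀ w}
  have hAD : A ⊆ D := fun _ hw => Conn.mem_of_subset_edgesIn Set.sdiff_subset hw hv₀
  refine ⟨Y.indicator fun e => A.indicator 1 (Sum.inl e.1) - A.indicator 1 (Sum.inr e.2),
    ?_, _, fun x hx => hx.sum_indicator_mul_eq _ Y fun e he =>
      hx.indicator_sub_mul_sub_eq_zero hD hAD (fun f hf => conn_inl_iff_conn_inr hf v₀) he⟩
  change Function.support _ = Y
  rw [Set.support_indicator, Set.inter_eq_left]
  intro e he
  exact (indicator_one_sub_indicator_one_eq_zero_iff A _ _).not.2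
    (not_conn_inl_iff_conn_inr_of_minimal_cut hv₀ hw₀ hv₀w₀ hmin he)

/-- For every minimal edge cut `Y` of a strongly connected component `D` of the
suppressed graph, the table has a linear invariant with effective area exactly `Y`. -/
theorem stmt1 [Fintype R] [Fintype C] [Nonempty R] [Nonempty C]
    (T : Table R C) (D : Set (R ⊕ C)) (hD : IsSCC T T.sup D)
    (Y : Set (R × C)) (hYsub : Y ⊆ EdgesIn T.sup D)
    (hcut : ¬ ConnectedOn (EdgesIn T.sup D \ Y) D)
    (hmin : ∀ Y' ⊂ Y, ConnectedOn (EdgesIn T.sup D \ Y') D) :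
    ∃ c : R × C → ℝ, {e | c e ≠ 0} = Y ∧
      ∃ ρ : ℝ, ∀ x, BFA T x → ∑ e : R × C, c e * x e = ρ :=
  stmt1_general T D hD Y hcut hmin
end

section
/- Let T be a table with suppressed graph H. If every connected component of H is strongly connected, then UK(T) = BK(T). -/
variable {R C : Type*}

/-- An unbounded feasible assignment of a table. -/
def UFA [Fintype R] [Fintype C] (T : Table R C) (x : R × C → ℝ) : Prop :=
  (∀ e, e ∉ T.sup → x e = T.val e) ∧
  (∀ i : R, ∑ j, x (i, j) = ∑ j, T.val (i, j)) ∧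
  (∀ j : C, ∑ i, x (i, j) = ∑ i, T.val (i, j))

/-- The unbounded kernel of a table. -/
def UK [Fintype R] [Fintype C] (T : Table R C) : Submodule ℝ (R × C → ℝ) :=
  Submodule.span ℝ {v | ∃ x y, UFA T x ∧ UFA T y ∧ v = x - y}

/-- The bounded kernel of a table. -/
def BK [Fintype R] [Fintype C] (T : Table R C) : Submodule ℝ (R × C → ℝ) :=
  Submodule.span ℝ {v | ∃ x y, BFA T x ∧ BFA T y ∧ v = x - y}

/-!
Every difference of unbounded feasible assignments is a circulation supported on the suppressed
cells, so it suffices to show that each such circulation `z` lies in `BK T`. A circulation `c`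
that is a feasible direction at `T.val` (it only increases cells with `val < hi` and only
decreases cells with `val > lo`) lies in `BK T`, since `T.val + t • c` is a bounded feasible
assignment for small `t > 0`; closed directed walks in the suppressed graph give such
circulations. If a functional `f` kills `BK T`, it therefore sums to zero around every closed
walk, and strong connectivity of the components lets us integrate it: there is a potential `π`
on the vertices with `f (single (i, j)) = π j - π i` on every suppressed cell. Pairing `z` with
this potential gives `f z = 0`, and as `BK T` is the common kernel of such functionals,
`z ∈ BK T`.
-/

open Filter Topology

/-- The signed line sums of `z`: the incidence map of the bipartite graph on `R ⊕ C` with every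
cell oriented from its row to its column, so that `boundary (single (i, j) 1) = δᵢ - δⱼ`. -/
def boundary [Fintype R] [Fintype C] : (R × C → ℝ) →ₗ[ℝ] (R ⊕ C → ℝ) where
  toFun z := Sum.elim (fun i => ∑ j, z (i, j)) (fun j => -∑ i, z (i, j))
  map_add' z w := by
    ext (i | j) <;> simp [Finset.sum_add_distrib, add_comm]
  map_smul' a z := by
    ext (i | j) <;> simp [Finset.mul_sum]

lemma eventually_nhdsGT_mul_le {p q : ℝ} (hp : 0 ≤ p) (hq : 0 < q → 0 < p) :
    ∀ᶠ t in 𝓝[>] (0 : ℝ), t * q ≤ p := by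
  rcases lt_or_ge 0 q with hq₀ | hq₀
  · filter_upwards [Ioo_mem_nhdsGT (div_pos (hq hq₀) hq₀)] with t ht
    exact ((lt_div_iff₀ hq₀).1 ht.2).le
  · filter_upwards [self_mem_nhdsWithin] with t ht
    exact (mul_nonpos_of_nonneg_of_nonpos (le_of_lt ht) hq₀).trans hp

section boundary

variable [Fintype R] [Fintype C]

@[simp]
lemma boundary_inl (z : R × C → ℝ) (i : R) : boundary z (Sum.inl i) = ∑ j, z (i, j) := rfl

@[simp]
lemma boundary_inr (z : R × C → ℝ) (j : C) : boundary z (Sum.inr j) = -∑ i, z (i, j) := rfl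

lemma boundary_eq_zero_iff {z : R × C → ℝ} :
    boundary z = 0 ↔ (∀ i, ∑ j, z (i, j) = 0) ∧ ∀ j, ∑ i, z (i, j) = 0 := by
  simp [funext_iff, Sum.forall]

lemma boundary_single [DecidableEq R] [DecidableEq C] (e : R × C) :
    boundary (Pi.single e 1) = Pi.single (Sum.inl e.1) 1 - Pi.single (Sum.inr e.2) 1 := by
  obtain ⟨a, b⟩ := e
  ext (i | j)
  · by_cases hi : i = a <;> simp [Pi.single_apply, Prod.ext_iff, hi]
  · by_cases hj : j = b <;> simp [Pi.single_apply, Prod.ext_iff, hj]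

lemma sum_boundary_mul (z : R × C → ℝ) (π : R ⊕ C → ℝ) :
    ∑ v, boundary z v * π v = ∑ e, z e * (π (Sum.inl e.1) - π (Sum.inr e.2)) := by
  simp only [Fintype.sum_sum_type, boundary_inl, boundary_inr, Fintype.sum_prod_type, mul_sub,
    Finset.sum_sub_distrib, Finset.sum_mul, neg_mul, Finset.sum_neg_distrib]
  rw [Finset.sum_comm (f := fun i j => z (i, j) * π (Sum.inr j))]
  ring

lemma UFA.boundary_eq {T : Table R C} {x : R × C → ℝ} (hx : UFA T x) :
    boundary x = boundary T.val := by
  ext (i | j)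
  · exact hx.2.1 i
  · simp only [boundary_inr, hx.2.2 j]

end boundary

namespace Table

variable (T : Table R C)

def IsFeasibleDir (z : R × C → ℝ) : Prop :=
  ∀ e, (z e ≠ 0 → e ∈ T.sup) ∧ (0 < z e → T.val e < T.hi e) ∧ (z e < 0 → T.lo e < T.val e)

variable {T}

lemma isFeasibleDir_zero : T.IsFeasibleDir 0 := fun _ => by simp

lemma IsFeasibleDir.add {z w : R × C → ℝ} (hz : T.IsFeasibleDir z) (hw : T.IsFeasibleDir w) :
    T.IsFeasibleDir (z + w) := by
  intro e
  obtain ⟨hz_supp, hz_pos, hz_neg⟩ := hz e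
  obtain ⟨hw_supp, hw_pos, hw_neg⟩ := hw e
  simp only [Pi.add_apply]
  refine ⟨fun h => ?_, fun h => ?_, fun h => ?_⟩
  · by_cases h' : z e = 0
    · exact hw_supp (by simpa [h'] using h)
    · exact hz_supp h'
  · rcases lt_or_ge 0 (z e) with h' | h'
    exacts [hz_pos h', hw_pos (by linarith)]
  · rcases lt_or_ge (z e) 0 with h' | h'
    exacts [hz_neg h', hw_neg (by linarith)]

lemma isFeasibleDir_single [DecidableEq R] [DecidableEq C] {e : R × C} (he : e ∈ T.sup)
    (hhi : T.val e < T.hi e) : T.IsFeasibleDir (Pi.single e 1) := by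
  intro e'
  by_cases h : e' = e
  · subst h
    simp [he, hhi]
  · simp [h]

lemma isFeasibleDir_neg_single [DecidableEq R] [DecidableEq C] {e : R × C} (he : e ∈ T.sup)
    (hlo : T.lo e < T.val e) : T.IsFeasibleDir (-Pi.single e 1) := by
  intro e'
  by_cases h : e' = e
  · subst h
    simp [he, hlo]
  · simp [h]

lemma IsFeasibleDir.eventually_bounds {z : R × C → ℝ} (hz : T.IsFeasibleDir z) (e : R × C) :
    ∀ᶠ t in 𝓝[>] (0 : ℝ), T.lo e ≤ T.val e + t * z e ∧ T.val e + t * z e ≤ T.hi e := by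
  have hlo := eventually_nhdsGT_mul_le (q := -z e) (sub_nonneg.2 (T.lo_le e))
    fun h => sub_pos.2 ((hz e).2.2 (neg_pos.1 h))
  have hhi := eventually_nhdsGT_mul_le (q := z e) (sub_nonneg.2 (T.le_hi e))
    fun h => sub_pos.2 ((hz e).2.1 h)
  filter_upwards [hlo, hhi] with t hlo hhi
  constructor <;> linarith

variable [Fintype R] [Fintype C]

lemma IsFeasibleDir.exists_bfa {z : R × C → ℝ}
    (hz : T.IsFeasibleDir z) (hz₀ : boundary z = 0) :
    ∃ t : ℝ, 0 < t ∧ BFA T (T.val + t • z) := by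
  obtain ⟨t, ht, hbounds⟩ :=
    (eventually_mem_nhdsWithin.and (eventually_all.2 hz.eventually_bounds)).exists
  obtain ⟨hrow, hcol⟩ := boundary_eq_zero_iff.1 hz₀
  refine ⟨t, ht, fun e he => ?_, fun e _ => hbounds e, fun i => ?_, fun j => ?_⟩
  · have : z e = 0 := not_not.1 fun h => he ((hz e).1 h)
    simp [this]
  · simp [Finset.sum_add_distrib, ← Finset.mul_sum, hrow i]
  · simp [Finset.sum_add_distrib, ← Finset.mul_sum, hcol j]

lemma bfa_val : BFA T T.val :=
  ⟨fun _ _ => rfl, fun e _ => ⟨T.lo_le e, T.le_hi e⟩, fun _ => rfl, fun _ => rfl⟩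

lemma IsFeasibleDir.mem_BK {z : R × C → ℝ}
    (hz : T.IsFeasibleDir z) (hz₀ : boundary z = 0) : z ∈ BK T := by
  obtain ⟨t, ht, hbfa⟩ := hz.exists_bfa hz₀
  have hmem : t • z ∈ BK T :=
    Submodule.subset_span ⟨_, _, hbfa, bfa_val, by simp⟩
  simpa [smul_smul, inv_mul_cancel₀ ht.ne'] using BK T |>.smul_mem t⁻¹ hmem

variable [DecidableEq R] [DecidableEq C]

lemma exists_isFeasibleDir_of_mreach {v w : R ⊕ C} (h : MReach T T.sup v w) :
    ∃ c, T.IsFeasibleDir c ∧ boundary c = Pi.single v 1 - Pi.single w 1 := by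
  induction h with
  | refl => exact ⟨0, isFeasibleDir_zero, by simp⟩
  | tail _ hstep ih =>
    obtain ⟨c, hc, hbc⟩ := ih
    obtain ⟨e, he, ⟨hhi, rfl, rfl⟩ | ⟨hlo, rfl, rfl⟩⟩ := hstep
    · refine ⟨c + Pi.single e 1, hc.add (isFeasibleDir_single he hhi), ?_⟩
      rw [map_add, hbc, boundary_single]
      abel
    · refine ⟨c + -Pi.single e 1, hc.add (isFeasibleDir_neg_single he hlo), ?_⟩
      rw [map_add, map_neg, hbc, boundary_single]
      abel

lemma apply_eq_of_mreach {f : Module.Dual ℝ (R × C → ℝ)} (hf : ∀ y ∈ BK T, f y = 0)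
    {v w : R ⊕ C} (hwv : MReach T T.sup w v) {c c' : R × C → ℝ}
    (hc : T.IsFeasibleDir c) (hc' : T.IsFeasibleDir c')
    (hbc : boundary c = Pi.single v 1 - Pi.single w 1)
    (hbc' : boundary c' = Pi.single v 1 - Pi.single w 1) : f c = f c' := by
  obtain ⟨d, hd, hbd⟩ := exists_isFeasibleDir_of_mreach hwv
  have closed : ∀ c, T.IsFeasibleDir c → boundary c = Pi.single v 1 - Pi.single w 1 →
      f c + f d = 0 := fun c hc hbc => by
    rw [← map_add]
    exact hf _ ((hc.add hd).mem_BK (by rw [map_add, hbc, hbd]; abel))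
  linarith [closed c hc hbc, closed c' hc' hbc']

lemma exists_potential
    (h : ∀ D : Set (R ⊕ C), IsCC T.sup D → ∀ v ∈ D, ∀ w ∈ D, MutReach T T.sup v w)
    {f : Module.Dual ℝ (R × C → ℝ)} (hf : ∀ y ∈ BK T, f y = 0) :
    ∃ π : R ⊕ C → ℝ, ∀ e ∈ T.sup, f (Pi.single e 1) = π (Sum.inr e.2) - π (Sum.inl e.1) := by
  have hmut : ∀ a b, Conn T.sup a b → MutReach T T.sup a b := fun a b hab =>
    h _ ⟨a, rfl⟩ a Relation.ReflTransGen.refl b hab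
  -- `root v` depends only on the set of vertices connected to `v`, so it is constant on components
  let root v := @Classical.epsilon _ ⟨v⟩ fun r => Conn T.sup r v
  have hroot v : Conn T.sup (root v) v := Classical.epsilon_spec (p := (Conn T.sup · v)) ⟨v, .refl⟩
  have hroot_eq {e} (he : e ∈ T.sup) : root (Sum.inl e.1) = root (Sum.inr e.2) := by
    simp only [root]
    congr 1
    exact funext fun r => propext
      ⟨fun hr => hr.tail ⟨e, he, .inl ⟨rfl, rfl⟩⟩, fun hr => hr.tail ⟨e, he, .inr ⟨rfl, rfl⟩⟩⟩
  choose c hc hbc using fun v => exists_isFeasibleDir_of_mreach (hmut _ v (hroot v)).1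
  refine ⟨fun v => f (c v), fun e he => ?_⟩
  rcases (T.le_hi e).lt_or_eq with hhi | hhi
  · have := apply_eq_of_mreach hf (hmut _ _ (hroot _)).2
      ((hc (Sum.inl e.1)).add (isFeasibleDir_single he hhi)) (hc (Sum.inr e.2))
      (by rw [map_add, hbc, boundary_single, hroot_eq he]; abel) (hbc _)
    rw [map_add] at this
    linarith
  · have hlo : T.lo e < T.val e := hhi ▸ T.lo_lt_hi e
    have := apply_eq_of_mreach hf (hmut _ _ (hroot _)).2
      ((hc (Sum.inr e.2)).add (isFeasibleDir_neg_single he hlo)) (hc (Sum.inl e.1))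
      (by rw [map_add, map_neg, hbc, boundary_single, hroot_eq he]; abel) (hbc _)
    rw [map_add, map_neg] at this
    linarith

lemma mem_BK_of_boundary_eq_zero
    (h : ∀ D : Set (R ⊕ C), IsCC T.sup D → ∀ v ∈ D, ∀ w ∈ D, MutReach T T.sup v w)
    {z : R × C → ℝ} (hz : ∀ e ∉ T.sup, z e = 0) (hz₀ : boundary z = 0) : z ∈ BK T := by
  rw [← Subspace.forall_mem_dualAnnihilator_apply_eq_zero_iff]
  intro f hf
  obtain ⟨π, hπ⟩ := exists_potential h fun y hy => (Submodule.mem_dualAnnihilator f).1 hf y hy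
  calc f z = ∑ e, z e * f (Pi.single e 1) := by
        conv_lhs => rw [← Finset.univ_sum_single z]
        simp only [map_sum]
        refine Finset.sum_congr rfl fun e _ => ?_
        rw [← smul_eq_mul, ← map_smul, ← Pi.single_smul', smul_eq_mul, mul_one]
    _ = ∑ e, z e * (π (Sum.inr e.2) - π (Sum.inl e.1)) := by
        refine Finset.sum_congr rfl fun e _ => ?_
        by_cases he : e ∈ T.sup
        · rw [hπ e he]
        · simp [hz e he]
    _ = -∑ v, boundary z v * π v := by
        simp only [sum_boundary_mul, ← Finset.sum_neg_distrib, ← mul_neg, neg_sub]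
    _ = 0 := by simp [hz₀]

end Table

theorem stmt2_general [Fintype R] [Fintype C]
    (T : Table R C)
    (h : ∀ D : Set (R ⊕ C), IsCC T.sup D → ∀ v ∈ D, ∀ w ∈ D, MutReach T T.sup v w) :
    UK T = BK T := by
  classical
  refine le_antisymm (Submodule.span_le.2 ?_) (Submodule.span_mono ?_)
  · rintro _ ⟨x, y, hx, hy, rfl⟩
    refine T.mem_BK_of_boundary_eq_zero h (fun e he => ?_) ?_
    · simp [hx.1 e he, hy.1 e he]
    · rw [map_sub, hx.boundary_eq, hy.boundary_eq, sub_self]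
  · rintro _ ⟨x, y, ⟨hx₀, -, hx⟩, ⟨hy₀, -, hy⟩, rfl⟩
    exact ⟨x, y, ⟨hx₀, hx⟩, ⟨hy₀, hy⟩, rfl⟩

/-- If every connected component of the suppressed graph is strongly connected,
then the unbounded kernel equals the bounded kernel. -/
theorem stmt2 [Fintype R] [Fintype C] [Nonempty R] [Nonempty C]
    (T : Table R C)
    (h : ∀ D : Set (R ⊕ C), IsCC T.sup D → ∀ v ∈ D, ∀ w ∈ D, MutReach T T.sup v w) :
    UK T = BK T :=
  stmt2_general T h
end

section
/- Let T be a table with suppressed graph H. Every direction-blindly labeled edge-simple cycle of H, regarded as a vector in ℝ^{R×C}, lies in the subspace UK(T). -/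
variable {R C : Type*}

/-- `z` is a direction-blindly labeled edge-simple cycle of the bipartite graph with
edge set `S`: the cycle visits rows `r 0, …, r (k-1)` and columns `c 0, …, c (k-1)`,
using the `2k` pairwise distinct edges `(r t, c t)` (labeled `+1`) and
`(r (t+1), c t)` (labeled `-1`); `z` is `0` off the cycle. -/
def IsDBCycle {R C : Type*} (S : Set (R × C)) (z : R × C → ℝ) : Prop :=
  ∃ (k : ℕ) (r : ℕ → R) (c : ℕ → C),
    0 < k ∧ r k = r 0 ∧
    (∀ t < k, (r t, c t) ∈ S ∧ (r (t + 1), c t) ∈ S) ∧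
    (∀ s < k, ∀ t < k, s ≠ t → (r s, c s) ≠ (r t, c t)) ∧
    (∀ s < k, ∀ t < k, s ≠ t → (r (s + 1), c s) ≠ (r (t + 1), c t)) ∧
    (∀ s < k, ∀ t < k, (r s, c s) ≠ (r (t + 1), c t)) ∧
    (∀ t < k, z (r t, c t) = 1 ∧ z (r (t + 1), c t) = -1) ∧
    (∀ e : R × C, (∀ t < k, e ≠ (r t, c t) ∧ e ≠ (r (t + 1), c t)) → z e = 0)

/-- Every direction-blindly labeled edge-simple cycle of the suppressed graph,
regarded as a vector, lies in the unbounded kernel. -/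
theorem stmt3 [Fintype R] [Fintype C] [Nonempty R] [Nonempty C]
    (T : Table R C) (z : R × C → ℝ) (hz : IsDBCycle T.sup z) :
    z ∈ UK T := by
  classical
  obtain ⟨k, r, c, hk, hrk, hmem, hd1, hd2, hd3, hval, hzero⟩ := hz
  -- pointwise formula for z
  have hzw : ∀ e, z e = ∑ t ∈ Finset.range k,
      ((if e = (r t, c t) then (1 : ℝ) else 0) +
        (if e = (r (t + 1), c t) then (-1 : ℝ) else 0)) := by
    intro e
    by_cases h1 : ∃ t, t < k ∧ e = (r t, c t)
    · obtain ⟨t, htk, het⟩ := h1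
      have hz1 : z e = 1 := by rw [het]; exact (hval t htk).1
      rw [hz1]
      symm
      have key : ∀ s ∈ Finset.range k,
          ((if e = (r s, c s) then (1 : ℝ) else 0) +
            (if e = (r (s + 1), c s) then (-1 : ℝ) else 0)) =
          (if s = t then (1 : ℝ) else 0) := by
        intro s hs
        rw [Finset.mem_range] at hs
        have h2 : e ≠ (r (s + 1), c s) := by
          rw [het]; exact hd3 t htk s hs
        by_cases hst : s = t
        · subst hst
          rw [if_pos het, if_neg h2, if_pos rfl]; ring
        · have h3 : e ≠ (r s, c s) := by
            rw [het]; exact hd1 t htk s hs (Ne.symm hst)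
          rw [if_neg h3, if_neg h2, if_neg hst]; ring
      rw [Finset.sum_congr rfl key, Finset.sum_ite_eq' (Finset.range k)]
      simp [htk]
    · by_cases h2 : ∃ t, t < k ∧ e = (r (t + 1), c t)
      · obtain ⟨t, htk, het⟩ := h2
        have hz1 : z e = -1 := by rw [het]; exact (hval t htk).2
        rw [hz1]
        symm
        have key : ∀ s ∈ Finset.range k,
            ((if e = (r s, c s) then (1 : ℝ) else 0) +
              (if e = (r (s + 1), c s) then (-1 : ℝ) else 0)) =
            (if s = t then (-1 : ℝ) else 0) := by
          intro s hs
          rw [Finset.mem_range] at hs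
          have h3 : e ≠ (r s, c s) := by
            rw [het]; exact fun h => hd3 s hs t htk h.symm
          by_cases hst : s = t
          · subst hst
            rw [if_neg h3, if_pos het, if_pos rfl]; ring
          · have h4 : e ≠ (r (s + 1), c s) := by
              rw [het]; exact hd2 t htk s hs (Ne.symm hst)
            rw [if_neg h3, if_neg h4, if_neg hst]; ring
        rw [Finset.sum_congr rfl key, Finset.sum_ite_eq' (Finset.range k)]
        simp [htk]
      · push_neg at h1 h2
        have hz0 : z e = 0 := hzero e (fun t ht => ⟨h1 t ht, h2 t ht⟩)
        rw [hz0]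
        symm
        apply Finset.sum_eq_zero
        intro s hs
        rw [Finset.mem_range] at hs
        rw [if_neg (h1 s hs), if_neg (h2 s hs)]; ring
  -- row sums of z are zero
  have hrow : ∀ i : R, ∑ j, z (i, j) = 0 := by
    intro i
    simp only [hzw]
    rw [Finset.sum_comm]
    have hterm : ∀ t ∈ Finset.range k,
        (∑ j : C, ((if (i, j) = (r t, c t) then (1 : ℝ) else 0) +
          (if (i, j) = (r (t + 1), c t) then (-1 : ℝ) else 0))) =
        (if r t = i then (1 : ℝ) else 0) - (if r (t + 1) = i then (1 : ℝ) else 0) := by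
      intro t _
      rw [Finset.sum_add_distrib]
      have e1 : (∑ j : C, (if (i, j) = (r t, c t) then (1 : ℝ) else 0)) =
          (if r t = i then (1 : ℝ) else 0) := by
        by_cases hi : i = r t
        · subst hi; simp [Prod.ext_iff]
        · have hne : ∀ j : C, (i, j) ≠ (r t, c t) :=
            fun j h => hi (congrArg Prod.fst h)
          simp [hne, Ne.symm hi]
      have e2 : (∑ j : C, (if (i, j) = (r (t + 1), c t) then (-1 : ℝ) else 0)) =
          if r (t + 1) = i then (-1 : ℝ) else 0 := by
        by_cases hi : i = r (t + 1)
        · subst hi; simp [Prod.ext_iff]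
        · have hne : ∀ j : C, (i, j) ≠ (r (t + 1), c t) :=
            fun j h => hi (congrArg Prod.fst h)
          simp [hne, Ne.symm hi]
      rw [e1, e2]
      by_cases hh1 : r t = i <;> by_cases hh2 : r (t + 1) = i <;> simp [hh1, hh2]
    rw [Finset.sum_congr rfl hterm, Finset.sum_range_sub', hrk]
    ring
  -- column sums of z are zero
  have hcol : ∀ j : C, ∑ i, z (i, j) = 0 := by
    intro j
    simp only [hzw]
    rw [Finset.sum_comm]
    apply Finset.sum_eq_zero
    intro t _
    rw [Finset.sum_add_distrib]
    have e1 : (∑ i : R, (if (i, j) = (r t, c t) then (1 : ℝ) else 0)) =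
        (if j = c t then (1 : ℝ) else 0) := by
      by_cases hj : j = c t
      · subst hj; simp [Prod.ext_iff]
      · have hne : ∀ i : R, (i, j) ≠ (r t, c t) :=
          fun i h => hj (congrArg Prod.snd h)
        simp [hne, hj]
    have e2 : (∑ i : R, (if (i, j) = (r (t + 1), c t) then (-1 : ℝ) else 0)) =
        if j = c t then (-1 : ℝ) else 0 := by
      by_cases hj : j = c t
      · subst hj; simp [Prod.ext_iff]
      · have hne : ∀ i : R, (i, j) ≠ (r (t + 1), c t) :=
          fun i h => hj (congrArg Prod.snd h)
        simp [hne, hj]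
    rw [e1, e2]
    by_cases hj : j = c t <;> simp [hj]
  -- z vanishes off the suppressed cells
  have hsup : ∀ e, e ∉ T.sup → z e = 0 := by
    intro e he
    apply hzero
    intro t ht
    exact ⟨fun h => he (h ▸ (hmem t ht).1), fun h => he (h ▸ (hmem t ht).2)⟩
  have hx : UFA T (T.val + z) := by
    refine ⟨fun e he => ?_, fun i => ?_, fun j => ?_⟩
    · simp [hsup e he]
    · simp only [Pi.add_apply, Finset.sum_add_distrib, hrow i, add_zero]
    · simp only [Pi.add_apply, Finset.sum_add_distrib, hcol j, add_zero]
  have hy : UFA T T.val := ⟨fun _ _ => rfl, fun _ => rfl, fun _ => rfl⟩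
  apply Submodule.subset_span
  exact ⟨T.val + z, T.val, hx, hy, by ext e; simp⟩
end

section
/- Let T be a table with suppressed graph H, and let F be a nonconstant analytic invariant of T such that every edge in EA(F) has its two endpoints mutually reachable in H (i.e., the edges of EA(F) are contained in the strongly connected components of H). Then there exists a strongly connected component D of H such that EA(F) ∩ E(D) is an edge cut of D, i.e., removing the edges of EA(F) from the undirected graph with vertex set D and edge set E(D) (directions disregarded) leaves it disconnected. -/
variable {R C : Type*}

/-- `F` is entire: it is the sum of a power series centered at some point with
infinite radius of convergence. -/
def Entire {ι : Type*} [Fintype ι] (F : (ι → ℝ) → ℝ) : Prop :=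
  ∃ (p : FormalMultilinearSeries ℝ (ι → ℝ) ℝ) (c : ι → ℝ),
    HasFPowerSeriesOnBall F p c ⊤

/-- `F x` depends only on the coordinates `x e` with `e ∈ S`. -/
def DependsOnlyOn {ι : Type*} (F : (ι → ℝ) → ℝ) (S : Set ι) : Prop :=
  ∀ x y : ι → ℝ, (∀ e ∈ S, x e = y e) → F x = F y

/-- `S` is the effective area of `F`: the smallest set of coordinates that `F`
depends on. -/
def IsEA {ι : Type*} (F : (ι → ℝ) → ℝ) (S : Set ι) : Prop :=
  DependsOnlyOn F S ∧ ∀ S', DependsOnlyOn F S' → S ⊆ S'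

/-- `F` takes the same value at every bounded feasible assignment of `T`. -/
def TableInvariant [Fintype R] [Fintype C] (T : Table R C) (F : (R × C → ℝ) → ℝ) : Prop :=
  ∀ x y, BFA T x → BFA T y → F x = F y

/-- `Q` is totally protected in `T`: there is no nonconstant analytic invariant of `T`
whose effective area is contained in `Q`. -/
def TotallyProtected [Fintype R] [Fintype C] (T : Table R C) (Q : Set (R × C)) : Prop :=
  ¬ ∃ (F : (R × C → ℝ) → ℝ) (S : Set (R × C)),
      Entire F ∧ DependsOnlyOn F T.sup ∧ TableInvariant T F ∧
      IsEA F S ∧ S ⊆ Q ∧ S.Nonempty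


namespace Stmt4Aux

open scoped Classical

/-- indicator vector of a cell -/
noncomputable def sv (e : R × C) : R × C → ℝ := fun p => if p = e then 1 else 0

/-- row indicator of a vertex -/
noncomputable def φR (v : R ⊕ C) (i : R) : ℝ := if v = Sum.inl i then 1 else 0
/-- column indicator of a vertex -/
noncomputable def φC (v : R ⊕ C) (j : C) : ℝ := if v = Sum.inr j then 1 else 0

lemma sv_nonneg (e p : R × C) : (0:ℝ) ≤ sv e p := by
  unfold sv; split <;> norm_num

lemma sv_row [Fintype C] (e : R × C) (i : R) :
    ∑ j, sv e (i, j) = φR (Sum.inl e.1 : R ⊕ C) i := by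
  obtain ⟨a, b⟩ := e
  simp only [sv, φR, Prod.mk.injEq, Sum.inl.injEq]
  by_cases h : i = a
  · subst h; simp
  · simp [h, Ne.symm h]

lemma sv_col [Fintype R] (e : R × C) (j : C) :
    ∑ i, sv e (i, j) = φC (Sum.inr e.2 : R ⊕ C) j := by
  obtain ⟨a, b⟩ := e
  simp only [sv, φC, Prod.mk.injEq, Sum.inr.injEq]
  by_cases h : j = b
  · subst h; simp
  · simp [h, Ne.symm h]

lemma φR_inr (j : C) (i : R) : φR (Sum.inr j : R ⊕ C) i = 0 := by simp [φR]
lemma φC_inl (i : R) (j : C) : φC (Sum.inl i : R ⊕ C) j = 0 := by simp [φC]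

/-- Generic flow-from-walk lemma. -/
lemma flow_aux [Fintype R] [Fintype C]
    {r : (R ⊕ C) → (R ⊕ C) → Prop} {Q : Set (R × C)} {P1 P2 : R × C → Prop}
    (hr : ∀ v w, r v w → ∃ e ∈ Q,
      (P1 e ∧ v = Sum.inl e.1 ∧ w = Sum.inr e.2) ∨ (P2 e ∧ v = Sum.inr e.2 ∧ w = Sum.inl e.1))
    {v w : R ⊕ C} (h : Relation.ReflTransGen r v w) :
    ∃ g : R × C → ℝ,
      (∀ e, g e ≠ 0 → e ∈ Q) ∧
      (∀ e, ¬ P1 e → g e ≤ 0) ∧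
      (∀ e, ¬ P2 e → 0 ≤ g e) ∧
      (∀ i, ∑ j, g (i, j) = φR v i - φR w i) ∧
      (∀ j, ∑ i, g (i, j) = φC w j - φC v j) := by
  induction h with
  | refl => exact ⟨0, by simp, by simp, by simp, by simp, by simp⟩
  | @tail b c hab hbc ih =>
    obtain ⟨g, hgQ, hg1, hg2, hgr, hgc⟩ := ih
    obtain ⟨e, heQ, hcase⟩ := hr _ _ hbc
    rcases hcase with ⟨hP, hb, hc⟩ | ⟨hP, hb, hc⟩
    · refine ⟨g + sv e, ?_, ?_, ?_, ?_, ?_⟩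
      · intro p hp
        by_cases hpe : p = e
        · exact hpe ▸ heQ
        · exact hgQ p (by simpa [sv, hpe] using hp)
      · intro p hp
        by_cases hpe : p = e
        · exact absurd (hpe ▸ hP) hp
        · simpa [sv, hpe] using hg1 p hp
      · intro p hp
        simpa using add_nonneg (hg2 p hp) (sv_nonneg e p)
      · intro i
        simp only [Pi.add_apply, Finset.sum_add_distrib, hgr i, sv_row, hb, hc, φR_inr]
        ring
      · intro j
        simp only [Pi.add_apply, Finset.sum_add_distrib, hgc j, sv_col, hb, hc, φC_inl]
        ring
    · refine ⟨g - sv e, ?_, ?_, ?_, ?_, ?_⟩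
      · intro p hp
        by_cases hpe : p = e
        · exact hpe ▸ heQ
        · exact hgQ p (by simpa [sv, hpe] using hp)
      · intro p hp
        simpa using sub_nonpos.mpr (le_trans (hg1 p hp) (sv_nonneg e p))
      · intro p hp
        by_cases hpe : p = e
        · exact absurd (hpe ▸ hP) hp
        · simpa [sv, hpe] using hg2 p hp
      · intro i
        simp only [Pi.sub_apply, Finset.sum_sub_distrib, hgr i, sv_row, hb, hc, φR_inr, φC_inl]
        ring
      · intro j
        simp only [Pi.sub_apply, Finset.sum_sub_distrib, hgc j, sv_col, hb, hc, φR_inr, φC_inl]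
        ring

lemma exists_pos_min [Fintype R] [Fintype C] [Nonempty R] [Nonempty C]
    (P : R × C → ℝ → Prop)
    (h : ∀ e, ∃ ε > 0, ∀ t, 0 < t → t ≤ ε → P e t) :
    ∃ ε > 0, ∀ e, P e ε := by
  choose f hf hP using h
  have hne : (Finset.univ : Finset (R × C)).Nonempty := Finset.univ_nonempty
  set ε := Finset.univ.inf' hne f with hε
  have hpos : 0 < ε := by
    rw [hε, Finset.lt_inf'_iff]
    exact fun e _ => hf e
  exact ⟨ε, hpos, fun e => hP e ε hpos (Finset.inf'_le f (Finset.mem_univ e))⟩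

end Stmt4Aux

open Stmt4Aux

/-- If `F` is a nonconstant analytic invariant whose effective area consists of edges
whose endpoints are mutually reachable in the suppressed graph, then the effective
area cuts some strongly connected component. -/
theorem stmt4 [Fintype R] [Fintype C] [Nonempty R] [Nonempty C]
    (T : Table R C) (F : (R × C → ℝ) → ℝ) (S : Set (R × C))
    (hent : Entire F) (hdep : DependsOnlyOn F T.sup) (hinv : TableInvariant T F)
    (hEA : IsEA F S) (hnc : ∃ x y, F x ≠ F y)
    (hin : ∀ e ∈ S, MutReach T T.sup (Sum.inl e.1) (Sum.inr e.2)) :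
    ∃ D : Set (R ⊕ C), IsSCC T T.sup D ∧
      ¬ ConnectedOn (EdgesIn T.sup D \ S) D := by
  classical
  by_contra hcon
  push_neg at hcon
  -- `hcon : ∀ D, IsSCC T T.sup D → ConnectedOn (EdgesIn T.sup D \ S) D`
  set MR : Set (R × C) :=
    {e | e ∈ T.sup ∧ MutReach T T.sup (Sum.inl e.1) (Sum.inr e.2)} with hMRdef
  have hS_sub : S ⊆ T.sup := hEA.2 T.sup hdep
  have hS_MR : ∀ e ∈ S, e ∈ MR := fun e he => ⟨hS_sub he, hin e he⟩
  have hrM : ∀ v w, MStep T T.sup v w → ∃ e ∈ T.sup,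
      ((T.val e < T.hi e) ∧ v = Sum.inl e.1 ∧ w = Sum.inr e.2) ∨
      ((T.lo e < T.val e) ∧ v = Sum.inr e.2 ∧ w = Sum.inl e.1) := fun v w h => h
  have mflow : ∀ v w, MReach T T.sup v w → ∃ g : R × C → ℝ,
      (∀ e, g e ≠ 0 → e ∈ T.sup) ∧
      (∀ e, T.val e = T.hi e → g e ≤ 0) ∧
      (∀ e, T.val e = T.lo e → 0 ≤ g e) ∧
      (∀ i, ∑ j, g (i, j) = φR v i - φR w i) ∧
      (∀ j, ∑ i, g (i, j) = φC w j - φC v j) := by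
    intro v w h
    obtain ⟨g, h1, h2, h3, h4, h5⟩ := flow_aux hrM h
    exact ⟨g, h1, fun e he => h2 e (by rw [he]; exact lt_irrefl _),
      fun e he => h3 e (by rw [he]; exact lt_irrefl _), h4, h5⟩
  -- Step A : per-cell circulations
  have cclaim : ∀ e : R × C, ∃ ce : R × C → ℝ,
      (∀ p, ce p ≠ 0 → p ∈ T.sup) ∧
      (∀ p, T.val p = T.lo p → 0 ≤ ce p) ∧
      (∀ p, T.val p = T.hi p → ce p ≤ 0) ∧
      (∀ i, ∑ j, ce (i, j) = 0) ∧
      (∀ j, ∑ i, ce (i, j) = 0) ∧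
      (e ∈ MR → T.val e = T.lo e → 1 ≤ ce e) ∧
      (e ∈ MR → T.val e = T.hi e → ce e ≤ -1) := by
    intro e
    by_cases heMR : e ∈ MR
    · by_cases hlo : T.val e = T.lo e
      · obtain ⟨g, h1, h2, h3, h4, h5⟩ := mflow _ _ heMR.2.2
        refine ⟨g + sv e, ?_, ?_, ?_, ?_, ?_, ?_, ?_⟩
        · intro p hp
          by_cases hpe : p = e
          · exact hpe ▸ heMR.1
          · exact h1 p (by simpa [sv, hpe] using hp)
        · intro p hp
          simpa using add_nonneg (h3 p hp) (sv_nonneg e p)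
        · intro p hp
          by_cases hpe : p = e
          · subst hpe
            exact absurd (hlo.symm.trans hp) (T.lo_lt_hi p).ne
          · simpa [sv, hpe] using h2 p hp
        · intro i
          simp only [Pi.add_apply, Finset.sum_add_distrib, h4 i, sv_row, φR_inr, φC_inl]
          ring
        · intro j
          simp only [Pi.add_apply, Finset.sum_add_distrib, h5 j, sv_col, φR_inr, φC_inl]
          ring
        · intro _ _
          have hg : 0 ≤ g e := h3 e hlo
          have hs : sv e e = 1 := by simp [sv]
          simp only [Pi.add_apply, hs]
          linarith
        · intro _ hhi
          exact absurd (hlo.symm.trans hhi) (T.lo_lt_hi e).ne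
      · by_cases hhi : T.val e = T.hi e
        · obtain ⟨g, h1, h2, h3, h4, h5⟩ := mflow _ _ heMR.2.1
          refine ⟨g - sv e, ?_, ?_, ?_, ?_, ?_, ?_, ?_⟩
          · intro p hp
            by_cases hpe : p = e
            · exact hpe ▸ heMR.1
            · exact h1 p (by simpa [sv, hpe] using hp)
          · intro p hp
            by_cases hpe : p = e
            · subst hpe
              exact absurd (hp.symm.trans hhi) (T.lo_lt_hi p).ne
            · simpa [sv, hpe] using h3 p hp
          · intro p hp
            simpa using sub_nonpos.mpr (le_trans (h2 p hp) (sv_nonneg e p))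
          · intro i
            simp only [Pi.sub_apply, Finset.sum_sub_distrib, h4 i, sv_row, φR_inr, φC_inl]
            ring
          · intro j
            simp only [Pi.sub_apply, Finset.sum_sub_distrib, h5 j, sv_col, φR_inr, φC_inl]
            ring
          · intro _ hlo'
            exact absurd (hlo'.symm.trans hhi) (T.lo_lt_hi e).ne
          · intro _ _
            have hg : g e ≤ 0 := h2 e hhi
            have hs : sv e e = 1 := by simp [sv]
            simp only [Pi.sub_apply, hs]
            linarith
        · exact ⟨0, by simp, by simp, by simp, by simp, by simp,
            fun _ h => absurd h hlo, fun _ h => absurd h hhi⟩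
    · exact ⟨0, by simp, by simp, by simp, by simp, by simp,
        fun h => absurd h heMR, fun h => absurd h heMR⟩
  choose cf hc1 hc2 hc3 hc4 hc5 hc6 hc7 using cclaim
  set c : R × C → ℝ := fun p => ∑ e, cf e p with hcdef
  have hc_apply : ∀ p, c p = ∑ e, cf e p := fun p => rfl
  have hcsup : ∀ p, c p ≠ 0 → p ∈ T.sup := by
    intro p hp
    by_contra hns
    exact hp (by
      rw [hc_apply]
      exact Finset.sum_eq_zero fun e _ => by
        by_contra h0
        exact hns (hc1 e p h0))
  have hclo : ∀ p, T.val p = T.lo p → 0 ≤ c p := fun p hp =>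
    Finset.sum_nonneg fun e _ => hc2 e p hp
  have hchi : ∀ p, T.val p = T.hi p → c p ≤ 0 := fun p hp =>
    Finset.sum_nonpos fun e _ => hc3 e p hp
  have hcrow : ∀ i, ∑ j, c (i, j) = 0 := by
    intro i
    rw [show ∑ j, c (i, j) = ∑ j, ∑ e, cf e (i, j) from rfl, Finset.sum_comm]
    exact Finset.sum_eq_zero fun e _ => hc4 e i
  have hccol : ∀ j, ∑ i, c (i, j) = 0 := by
    intro j
    rw [show ∑ i, c (i, j) = ∑ i, ∑ e, cf e (i, j) from rfl, Finset.sum_comm]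
    exact Finset.sum_eq_zero fun e _ => hc5 e j
  have hclo1 : ∀ p ∈ MR, T.val p = T.lo p → 1 ≤ c p := by
    intro p hp hlo
    have h1 : cf p p ≤ ∑ e, cf e p :=
      Finset.single_le_sum (fun e _ => hc2 e p hlo) (Finset.mem_univ p)
    have h2 := hc6 p hp hlo
    rw [hc_apply]; linarith
  have hchi1 : ∀ p ∈ MR, T.val p = T.hi p → c p ≤ -1 := by
    intro p hp hhi
    have h1 : -cf p p ≤ ∑ e, -cf e p :=
      Finset.single_le_sum (f := fun e => -cf e p)
        (fun e _ => by show (0:ℝ) ≤ -cf e p; linarith [hc3 e p hhi]) (Finset.mem_univ p)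
    have h2 := hc7 p hp hhi
    have h3 : ∑ e, -cf e p = -c p := by rw [hc_apply, ← Finset.sum_neg_distrib]
    rw [h3] at h1
    linarith
  -- Step B : the interior point b0
  have hP : ∀ e : R × C, ∃ ε > 0, ∀ t, 0 < t → t ≤ ε →
      (T.lo e ≤ T.val e + t * c e ∧ T.val e + t * c e ≤ T.hi e ∧
       (e ∈ MR → T.lo e < T.val e + t * c e ∧ T.val e + t * c e < T.hi e)) := by
    intro e
    rcases lt_trichotomy (c e) 0 with hneg | hzero | hpos
    · have hvlo : T.lo e < T.val e := by
        rcases eq_or_lt_of_le (T.lo_le e) with h | h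
        · exact absurd (hclo e h.symm) (by linarith)
        · exact h
      have hd : (0:ℝ) < -(2 * c e) := by linarith
      refine ⟨(T.val e - T.lo e) / (-(2 * c e)), div_pos (by linarith) hd, ?_⟩
      intro t ht hte
      have h2 : t * (-(2 * c e)) ≤ ((T.val e - T.lo e) / (-(2 * c e))) * (-(2 * c e)) :=
        mul_le_mul_of_nonneg_right hte (le_of_lt hd)
      rw [div_mul_cancel₀ _ (ne_of_gt hd)] at h2
      have h2' : -(2 * (t * c e)) ≤ T.val e - T.lo e := by nlinarith
      have h1 : t * c e < 0 := mul_neg_of_pos_of_neg ht hneg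
      exact ⟨by linarith, by linarith [T.le_hi e],
        fun _ => ⟨by linarith, by linarith [T.le_hi e]⟩⟩
    · refine ⟨1, one_pos, fun t ht hte => ?_⟩
      rw [hzero, mul_zero, add_zero]
      refine ⟨T.lo_le e, T.le_hi e, fun hMR => ⟨?_, ?_⟩⟩
      · rcases eq_or_lt_of_le (T.lo_le e) with h | h
        · have := hclo1 e hMR h.symm; linarith
        · exact h
      · rcases eq_or_lt_of_le (T.le_hi e) with h | h
        · have := hchi1 e hMR h; linarith
        · exact h
    · have hvhi : T.val e < T.hi e := by
        rcases eq_or_lt_of_le (T.le_hi e) with h | h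
        · exact absurd (hchi e h) (by linarith)
        · exact h
      have hd : (0:ℝ) < 2 * c e := by linarith
      refine ⟨(T.hi e - T.val e) / (2 * c e), div_pos (by linarith) hd, ?_⟩
      intro t ht hte
      have h2 : t * (2 * c e) ≤ ((T.hi e - T.val e) / (2 * c e)) * (2 * c e) :=
        mul_le_mul_of_nonneg_right hte (le_of_lt hd)
      rw [div_mul_cancel₀ _ (ne_of_gt hd)] at h2
      have h2' : 2 * (t * c e) ≤ T.hi e - T.val e := by nlinarith
      have h1 : 0 < t * c e := mul_pos ht hpos
      exact ⟨by linarith [T.lo_le e], by linarith,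
        fun _ => ⟨by linarith [T.lo_le e], by linarith⟩⟩
  obtain ⟨ε, hεpos, hεall⟩ := exists_pos_min _ hP
  set b0 : R × C → ℝ := fun p => T.val p + ε * c p with hb0def
  have hb0_apply : ∀ p, b0 p = T.val p + ε * c p := fun p => rfl
  have hb0_bounds : ∀ p, T.lo p ≤ b0 p ∧ b0 p ≤ T.hi p :=
    fun p => ⟨(hεall p).1, (hεall p).2.1⟩
  have hb0_strict : ∀ p ∈ MR, T.lo p < b0 p ∧ b0 p < T.hi p :=
    fun p hp => (hεall p).2.2 hp
  have hb0_off : ∀ p, p ∉ T.sup → b0 p = T.val p := by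
    intro p hp
    have h0 : c p = 0 := by
      by_contra h
      exact hp (hcsup p h)
    rw [hb0_apply, h0, mul_zero, add_zero]
  have hb0_rows : ∀ i, ∑ j, b0 (i, j) = ∑ j, T.val (i, j) := by
    intro i
    rw [show ∑ j, b0 (i, j) = ∑ j, (T.val (i, j) + ε * c (i, j)) from rfl,
      Finset.sum_add_distrib, ← Finset.mul_sum, hcrow i, mul_zero, add_zero]
  have hb0_cols : ∀ j, ∑ i, b0 (i, j) = ∑ i, T.val (i, j) := by
    intro j
    rw [show ∑ i, b0 (i, j) = ∑ i, (T.val (i, j) + ε * c (i, j)) from rfl,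
      Finset.sum_add_distrib, ← Finset.mul_sum, hccol j, mul_zero, add_zero]
  have hb0BFA : BFA T b0 :=
    ⟨fun p hp => hb0_off p hp, fun p _ => hb0_bounds p, hb0_rows, hb0_cols⟩
  -- Step C : compensating vectors for cells of S
  have zclaim : ∀ e : R × C, ∃ z : R × C → ℝ, e ∈ S →
      (z e = 1 ∧
        (∀ p, z p ≠ 0 → p = e ∨ (p ∈ MR ∧ p ∉ S)) ∧
        (∀ i, ∑ j, z (i, j) = 0) ∧
        (∀ j, ∑ i, z (i, j) = 0)) := by
    intro e
    by_cases he : e ∈ S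
    · have hscc : IsSCC T T.sup {w | MutReach T T.sup (Sum.inl e.1) w} := ⟨Sum.inl e.1, rfl⟩
      have hconn := hcon _ hscc
      have h1 : (Sum.inl e.1 : R ⊕ C) ∈ {w | MutReach T T.sup (Sum.inl e.1) w} :=
        ⟨Relation.ReflTransGen.refl, Relation.ReflTransGen.refl⟩
      have h2 : (Sum.inr e.2 : R ⊕ C) ∈ {w | MutReach T T.sup (Sum.inl e.1) w} := hin e he
      have hpath := hconn _ h1 _ h2
      have hrA : ∀ v w,
          Adj (EdgesIn T.sup {w | MutReach T T.sup (Sum.inl e.1) w} \ S) v w →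
          ∃ p ∈ (EdgesIn T.sup {w | MutReach T T.sup (Sum.inl e.1) w} \ S),
          (True ∧ v = Sum.inl p.1 ∧ w = Sum.inr p.2) ∨
          (True ∧ v = Sum.inr p.2 ∧ w = Sum.inl p.1) := by
        rintro v w ⟨p, hp, hcase⟩
        exact ⟨p, hp, by tauto⟩
      obtain ⟨g, hg1, _, _, hg4, hg5⟩ := flow_aux hrA hpath
      have hge : g e = 0 := by
        by_contra h
        exact (hg1 e h).2 he
      refine ⟨sv e - g, fun _ => ⟨?_, ?_, ?_, ?_⟩⟩
      · simp [sv, hge]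
      · intro p hp
        by_cases hpe : p = e
        · exact Or.inl hpe
        · right
          have hgp : g p ≠ 0 := by
            intro h0
            exact hp (by simp [sv, hpe, h0])
          obtain ⟨hpD, hpS⟩ := hg1 p hgp
          refine ⟨⟨hpD.1, ?_⟩, hpS⟩
          exact ⟨Relation.ReflTransGen.trans hpD.2.1.2 hpD.2.2.1,
            Relation.ReflTransGen.trans hpD.2.2.2 hpD.2.1.1⟩
      · intro i
        simp only [Pi.sub_apply, Finset.sum_sub_distrib, hg4 i, sv_row, φR_inr, φC_inl]
        ring
      · intro j
        simp only [Pi.sub_apply, Finset.sum_sub_distrib, hg5 j, sv_col, φR_inr, φC_inl]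
        ring
    · exact ⟨0, fun h => absurd h he⟩
  choose zf hzf using zclaim
  -- Step D : the radius δ
  set Sfin : Finset (R × C) := Finset.univ.filter (· ∈ S) with hSfin
  have heS : ∀ e, e ∈ Sfin ↔ e ∈ S := fun e => by simp [hSfin]
  set B : (R × C) → ℝ := fun p => ∑ e ∈ Sfin, |zf e p| with hBdef
  have hB_apply : ∀ p, B p = ∑ e ∈ Sfin, |zf e p| := fun p => rfl
  have hB0 : ∀ p, 0 ≤ B p := fun p => Finset.sum_nonneg fun e _ => abs_nonneg _
  have hQ : ∀ p : R × C, ∃ δ > 0, ∀ t, 0 < t → t ≤ δ →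
      (p ∈ MR → t * B p < b0 p - T.lo p ∧ t * B p < T.hi p - b0 p) := by
    intro p
    by_cases hp : p ∈ MR
    · have hg1 : 0 < b0 p - T.lo p := by linarith [(hb0_strict p hp).1]
      have hg2 : 0 < T.hi p - b0 p := by linarith [(hb0_strict p hp).2]
      rcases eq_or_lt_of_le (hB0 p) with h0 | h0
      · exact ⟨1, one_pos, fun t ht hte _ => by rw [← h0, mul_zero]; exact ⟨hg1, hg2⟩⟩
      · have hmin : 0 < min (b0 p - T.lo p) (T.hi p - b0 p) := lt_min hg1 hg2
        refine ⟨min (b0 p - T.lo p) (T.hi p - b0 p) / (2 * B p),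
          div_pos (by linarith) (by linarith), fun t ht hte _ => ?_⟩
        have hle : t * B p ≤ (min (b0 p - T.lo p) (T.hi p - b0 p) / (2 * B p)) * B p :=
          mul_le_mul_of_nonneg_right hte (hB0 p)
        have hcalc : (min (b0 p - T.lo p) (T.hi p - b0 p) / (2 * B p)) * B p
            = min (b0 p - T.lo p) (T.hi p - b0 p) / 2 := by
          field_simp
        rw [hcalc] at hle
        constructor
        · have := min_le_left (b0 p - T.lo p) (T.hi p - b0 p)
          linarith
        · have := min_le_right (b0 p - T.lo p) (T.hi p - b0 p)
          linarith
    · exact ⟨1, one_pos, fun t _ _ hpMR => absurd hpMR hp⟩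
  obtain ⟨δ, hδpos, hδall⟩ := exists_pos_min _ hQ
  -- Step E : F is constant on the ball around b0
  have key : ∀ x : R × C → ℝ, dist x b0 < δ → F x = F b0 := by
    intro x hx
    have hxp : ∀ p, |x p - b0 p| < δ := fun p =>
      lt_of_le_of_lt (by rw [← Real.dist_eq]; exact dist_le_pi_dist x b0 p) hx
    set Φ : R × C → ℝ := fun p => b0 p + ∑ e ∈ Sfin, (x e - b0 e) * zf e p with hΦdef
    have hΦ_apply : ∀ p, Φ p = b0 p + ∑ e ∈ Sfin, (x e - b0 e) * zf e p := fun p => rfl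
    have hΦS : ∀ p ∈ S, Φ p = x p := by
      intro p hp
      have hsum : ∑ e ∈ Sfin, (x e - b0 e) * zf e p = (x p - b0 p) * zf p p := by
        apply Finset.sum_eq_single p
        · intro e he hne
          have heS' : e ∈ S := (heS e).1 he
          have hz0 : zf e p = 0 := by
            by_contra h0
            rcases (hzf e heS').2.1 p h0 with h | h
            · exact hne (by rw [h])
            · exact h.2 hp
          rw [hz0, mul_zero]
        · intro hnp
          exact absurd ((heS p).2 hp) hnp
      rw [hΦ_apply, hsum, (hzf p hp).1, mul_one]
      ring
    have hΦoff : ∀ p, p ∉ MR → Φ p = b0 p := by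
      intro p hpMR
      have hz : ∀ e ∈ Sfin, zf e p = 0 := by
        intro e he
        by_contra h0
        have heS' : e ∈ S := (heS e).1 he
        rcases (hzf e heS').2.1 p h0 with h | h
        · exact hpMR (h ▸ hS_MR e heS')
        · exact hpMR h.1
      rw [hΦ_apply, Finset.sum_eq_zero (fun e he => by rw [hz e he, mul_zero]), add_zero]
    have hΦBFA : BFA T Φ := by
      refine ⟨?_, ?_, ?_, ?_⟩
      · intro p hp
        have hpMR : p ∉ MR := fun h => hp h.1
        rw [hΦoff p hpMR]
        exact hb0_off p hp
      · intro p _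
        by_cases hpMR : p ∈ MR
        · have hbound : |Φ p - b0 p| ≤ δ * B p := by
            have hrw : Φ p - b0 p = ∑ e ∈ Sfin, (x e - b0 e) * zf e p := by
              rw [hΦ_apply]; ring
            rw [hrw]
            calc |∑ e ∈ Sfin, (x e - b0 e) * zf e p|
                ≤ ∑ e ∈ Sfin, |(x e - b0 e) * zf e p| := Finset.abs_sum_le_sum_abs _ _
              _ ≤ ∑ e ∈ Sfin, δ * |zf e p| := Finset.sum_le_sum fun e _ => by
                  rw [abs_mul]
                  exact mul_le_mul_of_nonneg_right (le_of_lt (hxp e)) (abs_nonneg _)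
              _ = δ * B p := by rw [hB_apply, Finset.mul_sum]
          have h1 := (hδall p hpMR).1
          have h2 := (hδall p hpMR).2
          have habs := abs_le.mp hbound
          exact ⟨by linarith [habs.1], by linarith [habs.2]⟩
        · rw [hΦoff p hpMR]
          exact hb0_bounds p
      · intro i
        have hz : ∀ e ∈ Sfin, ∑ j, (x e - b0 e) * zf e (i, j) = 0 := fun e he => by
          rw [← Finset.mul_sum, (hzf e ((heS e).1 he)).2.2.1 i, mul_zero]
        calc ∑ j, Φ (i, j)
            = ∑ j, b0 (i, j) + ∑ e ∈ Sfin, ∑ j, ((x e - b0 e) * zf e (i, j)) := by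
              rw [show ∑ j, Φ (i, j)
                  = ∑ j, (b0 (i, j) + ∑ e ∈ Sfin, (x e - b0 e) * zf e (i, j)) from rfl,
                Finset.sum_add_distrib, Finset.sum_comm]
          _ = ∑ j, T.val (i, j) := by
              rw [Finset.sum_eq_zero hz, hb0_rows i, add_zero]
      · intro j
        have hz : ∀ e ∈ Sfin, ∑ i, (x e - b0 e) * zf e (i, j) = 0 := fun e he => by
          rw [← Finset.mul_sum, (hzf e ((heS e).1 he)).2.2.2 j, mul_zero]
        calc ∑ i, Φ (i, j)
            = ∑ i, b0 (i, j) + ∑ e ∈ Sfin, ∑ i, ((x e - b0 e) * zf e (i, j)) := by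
              rw [show ∑ i, Φ (i, j)
                  = ∑ i, (b0 (i, j) + ∑ e ∈ Sfin, (x e - b0 e) * zf e (i, j)) from rfl,
                Finset.sum_add_distrib, Finset.sum_comm]
          _ = ∑ i, T.val (i, j) := by
              rw [Finset.sum_eq_zero hz, hb0_cols j, add_zero]
    have hxΦ : F x = F Φ := hEA.1 x Φ (fun p hp => (hΦS p hp).symm)
    rw [hxΦ]
    exact hinv Φ b0 hΦBFA hb0BFA
  -- Step F : identity theorem
  obtain ⟨pw, cc, hps⟩ := hent
  have hA : AnalyticOnNhd ℝ F Set.univ := fun y _ =>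
    hps.analyticAt_of_mem (by rw [EMetric.mem_ball]; exact edist_lt_top _ _)
  have hconst : Set.EqOn F (fun _ => F b0) Set.univ := by
    apply hA.eqOn_of_preconnected_of_eventuallyEq analyticOnNhd_const
      convex_univ.isPreconnected (Set.mem_univ b0)
    filter_upwards [Metric.ball_mem_nhds b0 hδpos] with x hx
    exact key x (by rwa [Metric.mem_ball] at hx)
  obtain ⟨x, y, hxy⟩ := hnc
  exact hxy ((hconst (Set.mem_univ x)).trans (hconst (Set.mem_univ y)).symm)
end

section
/- Let H = (A, B, E) be a finite undirected bipartite graph and let Q ⊆ E be such that for every connected component D of H, the graph obtained from D by deleting the edges of Q (keeping all vertices of D) is connected. Then for every y : E → ℝ there exists a vector z in the cycle space of H (the linear span in ℝ^E of all direction-blindly labeled edge-simple cycles of H) such that z(e) = y(e) for every e ∈ Q. -/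
/-!
For an edge `q = (a, b) ∈ Q`, the endpoints `a` and `b` lie in one component of `H`, so by
hypothesis they are joined by a path avoiding `Q`. Closing that path with `q` gives an edge-simple
cycle whose labeled vector is `1` at `q` and `0` on the rest of `Q`. These vectors are dual to the
coordinates on `Q`, so `∑_{q ∈ Q} y q • z_q` lies in the cycle space and agrees with `y` on `Q`.
-/

variable {R C : Type*}

open Sum

section Bipartite

variable {S : Set (R × C)}

lemma adj_comm {v w : R ⊕ C} : Adj S v w ↔ Adj S w v := by
  constructor <;> rintro ⟨e, he, h | h⟩ <;> exact ⟨e, he, by tauto⟩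

@[simp]
lemma adj_inl_inr {a : R} {b : C} : Adj S (inl a) (inr b) ↔ (a, b) ∈ S := by
  simp [Adj]

@[simp]
lemma adj_inr_inl {a : R} {b : C} : Adj S (inr b) (inl a) ↔ (a, b) ∈ S := by
  simp [Adj]

lemma Adj.isLeft_ne {v w : R ⊕ C} (h : Adj S v w) : v.isLeft ≠ w.isLeft := by
  obtain ⟨e, -, ⟨rfl, rfl⟩ | ⟨rfl, rfl⟩⟩ := h <;> simp

variable (S) in
def bipGraph : SimpleGraph (R ⊕ C) where
  Adj := Adj S
  symm := ⟨fun _ _ => adj_comm.mp⟩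
  loopless := ⟨fun _ h => Adj.isLeft_ne h rfl⟩

@[simp]
lemma bipGraph_adj {v w : R ⊕ C} : (bipGraph S).Adj v w ↔ Adj S v w := Iff.rfl

lemma reachable_bipGraph_iff {v w : R ⊕ C} : (bipGraph S).Reachable v w ↔ Conn S v w :=
  SimpleGraph.reachable_iff_reflTransGen v w

variable (S) in
def bipColoring : (bipGraph S).Coloring Bool :=
  SimpleGraph.Coloring.mk Sum.isLeft fun h => h.isLeft_ne

@[simp]
lemma bipColoring_apply (v : R ⊕ C) : bipColoring S v = v.isLeft := rfl

lemma isLeft_getVert_iff_odd {b : C} {v : R ⊕ C} (p : (bipGraph S).Walk (inr b) v) {i : ℕ}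
    (hi : i ≤ p.length) : (p.getVert i).isLeft ↔ Odd i := by
  simpa [SimpleGraph.Walk.take_length, hi] using
    ((bipColoring S).odd_length_iff_not_congr (p.take i)).symm

end Bipartite

section Cycle

variable {S : Set (R × C)} {k : ℕ} {r : ℕ → R} {c : ℕ → C}

open Classical in
noncomputable def cycleVec (k : ℕ) (r : ℕ → R) (c : ℕ → C) (e : R × C) : ℝ :=
  if ∃ t < k, e = (r t, c t) then 1
  else if ∃ t < k, e = (r (t + 1), c t) then -1 else 0

lemma cycleVec_apply_left {t : ℕ} (ht : t < k) : cycleVec k r c (r t, c t) = 1 :=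
  if_pos ⟨t, ht, rfl⟩

lemma cycleVec_eq_zero {e : R × C} (he : ∀ t < k, e ≠ (r t, c t) ∧ e ≠ (r (t + 1), c t)) :
    cycleVec k r c e = 0 := by
  rw [cycleVec, if_neg, if_neg]
  · exact fun ⟨t, ht, h⟩ => (he t ht).2 h
  · exact fun ⟨t, ht, h⟩ => (he t ht).1 h

lemma left_ne_right_of_injOn (hc : Set.InjOn c (Set.Iio k)) (hr : ∀ t < k, r t ≠ r (t + 1))
    {s t : ℕ} (hs : s < k) (ht : t < k) : (r s, c s) ≠ (r (t + 1), c t) := by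
  intro h
  obtain rfl : s = t := hc hs ht (Prod.ext_iff.mp h).2
  exact hr s hs (Prod.ext_iff.mp h).1

lemma isDBCycle_cycleVec (hk : 0 < k) (hrk : r k = r 0)
    (hS : ∀ t < k, (r t, c t) ∈ S ∧ (r (t + 1), c t) ∈ S) (hc : Set.InjOn c (Set.Iio k))
    (hr : ∀ t < k, r t ≠ r (t + 1)) : IsDBCycle S (cycleVec k r c) := by
  have hcross := fun s (hs : s < k) t (ht : t < k) => left_ne_right_of_injOn hc hr hs ht
  refine ⟨k, r, c, hk, hrk, hS, ?_, ?_, hcross, fun t ht => ⟨cycleVec_apply_left ht, ?_⟩,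
    fun e he => cycleVec_eq_zero he⟩
  · exact fun s hs t ht hst h => hst (hc hs ht (Prod.ext_iff.mp h).2)
  · exact fun s hs t ht hst h => hst (hc hs ht (Prod.ext_iff.mp h).2)
  · rw [cycleVec, if_neg, if_pos ⟨t, ht, rfl⟩]
    rintro ⟨s, hs, h⟩
    exact hcross s hs t ht h.symm

end Cycle

lemma exists_rows_cols_of_isPath {S : Set (R × C)} {a : R} {b : C}
    {p : (bipGraph S).Walk (inr b) (inl a)} (hp : p.IsPath) :
    ∃ (k : ℕ) (r : ℕ → R) (c : ℕ → C), 0 < k ∧ r 0 = a ∧ r k = a ∧ c 0 = b ∧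
      (∀ t < k, (r (t + 1), c t) ∈ S) ∧ (∀ t < k, 0 < t → (r t, c t) ∈ S) ∧
      Set.InjOn c (Set.Iio k) ∧ Set.InjOn r (Set.Icc 1 k) := by
  obtain ⟨m, hm⟩ : Odd p.length := by
    simpa using (isLeft_getVert_iff_odd p le_rfl).mp
  -- the path alternates `inr (c 0), inl (r 1), inr (c 1), …, inl (r k)`; `r 0` falls back to `a`
  -- because `2 * 0 - 1 = 0` in `ℕ`
  let c (t : ℕ) : C := (p.getVert (2 * t)).elim (fun _ => b) id
  let r (t : ℕ) : R := (p.getVert (2 * t - 1)).elim id (fun _ => a)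
  have hc : ∀ t < m + 1, p.getVert (2 * t) = inr (c t) := by
    intro t ht
    obtain ⟨x, hx⟩ := Sum.isRight_iff.mp <| Sum.not_isLeft.mp <|
      mt (isLeft_getVert_iff_odd p (i := 2 * t) (by omega)).mp (by simp)
    simp [c, hx]
  have hr : ∀ t ∈ Set.Icc 1 (m + 1), p.getVert (2 * t - 1) = inl (r t) := by
    intro t ht
    obtain ⟨x, hx⟩ := Sum.isLeft_iff.mp <|
      (isLeft_getVert_iff_odd p (i := 2 * t - 1) (by grind)).mpr ⟨t - 1, by grind⟩
    simp [r, hx]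
  have hinj := hp.getVert_injOn
  refine ⟨m + 1, r, c, by omega, by simp [r], ?_, by simp [c], fun t ht => ?_, fun t ht ht0 => ?_,
    fun s hs t ht h => ?_, fun s hs t ht h => ?_⟩
  · simpa [show 2 * (m + 1) - 1 = p.length by omega, eq_comm] using hr (m + 1) (by simp)
  · have := p.adj_getVert_succ (i := 2 * t) (by omega)
    rw [hc t ht, show 2 * t + 1 = 2 * (t + 1) - 1 by omega, hr (t + 1) (by simp; omega)] at this
    simpa using this
  · have := p.adj_getVert_succ (i := 2 * t - 1) (by omega)
    rw [hr t ⟨ht0, ht.le⟩, show 2 * t - 1 + 1 = 2 * t by omega, hc t ht] at this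
    simpa using this
  · rw [Set.mem_Iio] at hs ht
    have := hinj (by simp; omega) (by simp; omega) ((hc s hs).trans (h ▸ hc t ht).symm)
    omega
  · rw [Set.mem_Icc] at hs ht
    have := hinj (by simp; omega) (by simp; omega) ((hr s hs).trans (h ▸ hr t ht).symm)
    omega

theorem exists_isDBCycle_of_conn {E T : Set (R × C)} (hTE : T ⊆ E) {a : R} {b : C}
    (hab : (a, b) ∈ E) (habT : (a, b) ∉ T) (hconn : Conn T (inr b) (inl a)) :
    ∃ z, IsDBCycle E z ∧ z (a, b) = 1 ∧ ∀ e ∉ T, e ≠ (a, b) → z e = 0 := by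
  classical
  obtain ⟨w⟩ := reachable_bipGraph_iff.mpr hconn
  obtain ⟨k, r, c, hk, hr0, hrk, hc0, hright, hleft, hc, hr⟩ :=
    exists_rows_cols_of_isPath w.toPath.2
  have hedge : ∀ t < k, (r t, c t) ∈ E ∧ (r (t + 1), c t) ∈ E := by
    intro t ht
    refine ⟨?_, hTE (hright t ht)⟩
    rcases Nat.eq_zero_or_pos t with rfl | ht0
    · rwa [hr0, hc0]
    · exact hTE (hleft t ht ht0)
  have hstep : ∀ t < k, r t ≠ r (t + 1) := by
    intro t ht h
    rcases Nat.eq_zero_or_pos t with rfl | ht0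
    · exact habT (by simpa [hr0, hc0, ← h] using hright 0 ht)
    · have := hr ⟨ht0, ht.le⟩ ⟨by omega, ht⟩ h
      omega
  refine ⟨cycleVec k r c, isDBCycle_cycleVec hk (hrk.trans hr0.symm) hedge hc hstep,
    hr0 ▸ hc0 ▸ cycleVec_apply_left hk, fun e he hne => cycleVec_eq_zero fun t ht => ⟨?_, ?_⟩⟩
  · rintro rfl
    rcases Nat.eq_zero_or_pos t with rfl | ht0
    · exact hne (by rw [hr0, hc0])
    · exact he (hleft t ht ht0)
  · rintro rfl
    exact he (hright t ht)

theorem Submodule.exists_mem_eqOn_of_forall_exists_single {K ι : Type*} [Semiring K]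
    (P : Submodule K (ι → K)) {Q : Set ι} (hQ : Q.Finite)
    (h : ∀ q ∈ Q, ∃ z ∈ P, z q = 1 ∧ ∀ e ∈ Q, e ≠ q → z e = 0) (y : ι → K) :
    ∃ z ∈ P, Set.EqOn z y Q := by
  choose! f hfP hf using h
  refine ⟨∑ q ∈ hQ.toFinset, y q • f q,
    P.sum_mem fun q hq => P.smul_mem _ (hfP q (hQ.mem_toFinset.mp hq)), fun e he => ?_⟩
  rw [Finset.sum_apply, Finset.sum_eq_single_of_mem e (hQ.mem_toFinset.mpr he)]
  · simp [(hf e he).1]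
  · intro q hq hne
    simp [(hf q (hQ.mem_toFinset.mp hq)).2 e he hne.symm]

/-- If deleting the edges of `Q` keeps every connected component of the bipartite
graph `(A, B, E)` connected, then every prescription `y` of values on `Q` is matched
by some vector of the cycle space of `(A, B, E)`. -/
theorem stmt7 {A B : Type*} [Fintype A] [Fintype B]
    (E Q : Set (A × B)) (hQE : Q ⊆ E)
    (hconn : ∀ D : Set (A ⊕ B), IsCC E D → ConnectedOn (E \ Q) D)
    (y : A × B → ℝ) :
    ∃ z ∈ Submodule.span ℝ {z : A × B → ℝ | IsDBCycle E z},
      ∀ e ∈ Q, z e = y e := by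
  refine Submodule.exists_mem_eqOn_of_forall_exists_single _ Q.toFinite ?_ y
  rintro ⟨a, b⟩ hq
  have hab : Conn E (inl a) (inr b) := .single (adj_inl_inr.mpr (hQE hq))
  obtain ⟨z, hz, hzq, hz0⟩ := exists_isDBCycle_of_conn Set.sdiff_subset (hQE hq) (fun h => h.2 hq)
    (hconn _ ⟨inl a, rfl⟩ (inr b) hab (inl a) .refl)
  exact ⟨z, Submodule.subset_span hz, hzq, fun e he hne => hz0 e (fun h => h.2 he) hne⟩
end

section
/- Let T be a table, let S ⊆ ℝ^{R×C} be its set of bounded feasible assignments (which is nonempty, since the value matrix a itself is one), and fix x₀ ∈ S. Then the set {x − x₀ : x ∈ S} contains a nonempty subset that is open in the subspace topology of BK(T). -/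
variable {R C : Type*}

/-- The set of differences `x - x₀`, for `x` ranging over the bounded feasible
assignments, contains a nonempty subset that is open in the subspace topology
of the bounded kernel `BK T`. -/
theorem stmt8 [Fintype R] [Fintype C] [Nonempty R] [Nonempty C]
    (T : Table R C) (x₀ : R × C → ℝ) (hx₀ : BFA T x₀) :
    ∃ U : Set (R × C → ℝ), U.Nonempty ∧
      U ⊆ {v | ∃ x, BFA T x ∧ v = x - x₀} ∧
      ∃ O : Set (R × C → ℝ), IsOpen O ∧ U = O ∩ (BK T : Set (R × C → ℝ)) := by
  set D : Set (R × C → ℝ) := {v | ∃ x, BFA T x ∧ v = x - x₀} with hD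
  have h0 : (0 : R × C → ℝ) ∈ D := ⟨x₀, hx₀, by simp⟩
  -- convexity of the set of BFAs
  have hconvS : Convex ℝ {x : R × C → ℝ | BFA T x} := by
    intro x hx y hy a b ha hb hab
    obtain ⟨hx1, hx2, hx3, hx4⟩ := hx
    obtain ⟨hy1, hy2, hy3, hy4⟩ := hy
    refine ⟨fun e he => ?_, fun e he => ?_, fun i => ?_, fun j => ?_⟩
    · simp only [Pi.add_apply, Pi.smul_apply, smul_eq_mul, hx1 e he, hy1 e he]
      linear_combination T.val e * hab
    · obtain ⟨hxl, hxu⟩ := hx2 e he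
      obtain ⟨hyl, hyu⟩ := hy2 e he
      constructor
      · calc T.lo e = a * T.lo e + b * T.lo e := by rw [← add_mul, hab, one_mul]
          _ ≤ a * x e + b * y e :=
            add_le_add (mul_le_mul_of_nonneg_left hxl ha) (mul_le_mul_of_nonneg_left hyl hb)
          _ = (a • x + b • y) e := by simp [smul_eq_mul]
      · calc (a • x + b • y) e = a * x e + b * y e := by simp [smul_eq_mul]
          _ ≤ a * T.hi e + b * T.hi e :=
            add_le_add (mul_le_mul_of_nonneg_left hxu ha) (mul_le_mul_of_nonneg_left hyu hb)
          _ = T.hi e := by rw [← add_mul, hab, one_mul]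
    · simp only [Pi.add_apply, Pi.smul_apply, smul_eq_mul]
      rw [Finset.sum_add_distrib, ← Finset.mul_sum, ← Finset.mul_sum, hx3 i, hy3 i,
        ← add_mul, hab, one_mul]
    · simp only [Pi.add_apply, Pi.smul_apply, smul_eq_mul]
      rw [Finset.sum_add_distrib, ← Finset.mul_sum, ← Finset.mul_sum, hx4 j, hy4 j,
        ← add_mul, hab, one_mul]
  have hDeq : D = (fun v => -x₀ + v) '' {x : R × C → ℝ | BFA T x} := by
    ext v
    constructor
    · rintro ⟨x, hx, rfl⟩; exact ⟨x, hx, by abel⟩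
    · rintro ⟨x, hx, rfl⟩; exact ⟨x, hx, by abel⟩
  have hconvD : Convex ℝ D := hDeq ▸ hconvS.translate _
  -- span of D equals BK T
  have hspan : Submodule.span ℝ D = BK T := by
    apply le_antisymm
    · apply Submodule.span_le.2
      rintro v ⟨x, hx, rfl⟩
      exact Submodule.subset_span ⟨x, x₀, hx, hx₀, rfl⟩
    · apply Submodule.span_le.2
      rintro v ⟨x, y, hx, hy, rfl⟩
      have : x - y = (x - x₀) - (y - x₀) := by abel
      rw [this]
      exact Submodule.sub_mem _ (Submodule.subset_span ⟨x, hx, rfl⟩)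
        (Submodule.subset_span ⟨y, hy, rfl⟩)
  have haff : (affineSpan ℝ D : Set (R × C → ℝ)) = (BK T : Set (R × C → ℝ)) := by
    rw [← hspan, ← affineSpan_insert_zero, Set.insert_eq_of_mem h0]
  -- nonempty intrinsic interior
  have hne : (intrinsicInterior ℝ D).Nonempty :=
    Set.Nonempty.intrinsicInterior hconvD ⟨0, h0⟩
  refine ⟨intrinsicInterior ℝ D, hne, intrinsicInterior_subset, ?_⟩
  -- intrinsicInterior = coe '' interior (coe ⁻¹' D)
  have hopen : IsOpen (interior ((↑) ⁻¹' D : Set (affineSpan ℝ D))) := isOpen_interior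
  rw [isOpen_induced_iff] at hopen
  obtain ⟨O, hO, hOeq⟩ := hopen
  refine ⟨O, hO, ?_⟩
  have : intrinsicInterior ℝ D =
      (↑) '' (interior ((↑) ⁻¹' D : Set (affineSpan ℝ D))) := rfl
  rw [this, ← hOeq]
  ext v
  simp only [Set.mem_image, Set.mem_preimage, Set.mem_inter_iff, ← haff]
  constructor
  · rintro ⟨⟨w, hw⟩, hwO, rfl⟩; exact ⟨hwO, hw⟩
  · rintro ⟨hvO, hv⟩; exact ⟨⟨v, hv⟩, hvO, rfl⟩
end

section
/- Let T be a table with suppressed cell set E, total graph H' = (A, B, E'), and suppressed graph H = (A, B, E), and let P ⊆ E' − E. If E is totally protected in the table T̄_P obtained from T by additionally suppressing the cells in P, then the set P' ⊆ P of those edges of P whose two endpoints are mutually reachable in (A, B, E ∪ P) satisfies Property N1 (every connected component of (A, B, E ∪ P') is strongly connected) and Property N2 (for every connected component D of H, all vertices of D lie in a single connected component of (A, B, P')); moreover |P'| ≤ |P|. -/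
variable {R C : Type*}

/-- The table obtained from `T` by additionally suppressing the cells in `P`. -/
def Table.addSup (T : Table R C) (P : Set (R × C)) : Table R C :=
  { T with sup := T.sup ∪ P }

/-! Fix a feasible assignment `x` of a table with values `a`. Since `x - a` has zero row and
column sums, it is orthogonal to the coboundary `δφ (i, j) = φ i - φ j` of every potential `φ`
on the vertices. If `φ` does not increase along traversable steps (for instance the indicator
of the set of vertices from which a fixed vertex is reachable), every term of this zero sum is
nonnegative, so `x = a` on every cell where `δφ ≠ 0`; in particular a cell whose endpoints are
not mutually reachable keeps its published value.

Total protection of `E` rules out nonzero linear invariants supported in `E`. For the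
coordinate of a cell of `E` this gives mutual reachability across it in `E ∪ P`, hence N1,
since paths inside strongly connected pieces only use edges of `P'`. For `δφ` restricted to
`E`, with `φ` the indicator of a component of `(A, B, P')`, it gives N2: off `E` the terms
`δφ · (x - a)` vanish, on `P'` because `δφ = 0` there and on `P \ P'` because `x = a`. -/

open Matrix

section Graphs

variable {T : Table R C} {S P : Set (R × C)} {v w : R ⊕ C}

lemma adj_symm (h : Adj S v w) : Adj S w v := by
  obtain ⟨e, he, h | h⟩ := h
  · exact ⟨e, he, Or.inr ⟨h.2, h.1⟩⟩
  · exact ⟨e, he, Or.inl ⟨h.2, h.1⟩⟩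

instance (S : Set (R × C)) : Std.Symm (Adj S) := ⟨fun _ _ => adj_symm⟩

lemma conn_equivalence (S : Set (R × C)) : Equivalence (Conn S) :=
  ⟨fun _ => .refl, fun h => Std.Symm.symm (r := Relation.ReflTransGen (Adj S)) _ _ h, .trans⟩

lemma IsCC.conn {D : Set (R ⊕ C)} (hD : IsCC S D) (hv : v ∈ D) (hw : w ∈ D) : Conn S v w := by
  obtain ⟨v₀, rfl⟩ := hD
  exact (conn_equivalence S).trans ((conn_equivalence S).symm hv) hw

lemma Conn.rel_of_forall {r : R ⊕ C → R ⊕ C → Prop} (hr : Equivalence r)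
    (hS : ∀ e ∈ S, r (Sum.inl e.1) (Sum.inr e.2)) (h : Conn S v w) : r v w := by
  induction h with
  | refl => exact hr.refl _
  | tail _ hstep ih =>
    obtain ⟨e, he, ⟨rfl, rfl⟩ | ⟨rfl, rfl⟩⟩ := hstep
    · exact hr.trans ih (hS e he)
    · exact hr.trans ih (hr.symm (hS e he))

lemma mutReach_equivalence (T : Table R C) (S : Set (R × C)) : Equivalence (MutReach T S) :=
  ⟨fun _ => ⟨.refl, .refl⟩, fun h => ⟨h.2, h.1⟩, fun h₁ h₂ => ⟨h₁.1.trans h₂.1, h₂.2.trans h₁.2⟩⟩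

lemma mutReach_endpoints_of_mutReach {e : R × C}
    (h : (T.val e < T.hi e ∧ v = Sum.inl e.1 ∧ w = Sum.inr e.2) ∨
      (T.lo e < T.val e ∧ v = Sum.inr e.2 ∧ w = Sum.inl e.1))
    (hvw : MutReach T S v w) : MutReach T S (Sum.inl e.1) (Sum.inr e.2) := by
  rcases h with ⟨_, rfl, rfl⟩ | ⟨_, rfl, rfl⟩
  · exact hvw
  · exact (mutReach_equivalence T S).symm hvw

-- For `S = E` this is the set `P'` of the statement.
def cyclicEdges (T : Table R C) (S P : Set (R × C)) : Set (R × C) :=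
  {e | e ∈ P ∧ MutReach T (S ∪ P) (Sum.inl e.1) (Sum.inr e.2)}

-- Once `w` reaches `v`, every edge of a path from `v` to `w` lies on a cycle.
lemma MReach.union_cyclicEdges (h : MReach T (S ∪ P) v w) (hwv : MReach T (S ∪ P) w v) :
    MReach T (S ∪ cyclicEdges T S P) v w := by
  induction h with
  | refl => exact .refl
  | @tail b d hvb hbd ih =>
    refine (ih ((Relation.ReflTransGen.single hbd).trans hwv)).tail ?_
    obtain ⟨e, he | he, hdir⟩ := hbd
    · exact ⟨e, Or.inl he, hdir⟩
    · exact ⟨e, Or.inr ⟨he, mutReach_endpoints_of_mutReach hdir ⟨.single ⟨e, Or.inr he, hdir⟩,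
        hwv.trans hvb⟩⟩, hdir⟩

lemma MutReach.union_cyclicEdges (h : MutReach T (S ∪ P) v w) :
    MutReach T (S ∪ cyclicEdges T S P) v w :=
  ⟨h.1.union_cyclicEdges h.2, h.2.union_cyclicEdges h.1⟩

end Graphs

section Cuts

variable [Fintype R] [Fintype C] {T : Table R C} {x : R × C → ℝ}

def coboundary (φ : R ⊕ C → ℝ) (e : R × C) : ℝ := φ (Sum.inl e.1) - φ (Sum.inr e.2)

lemma BFA.coboundary_dotProduct_sub_eq_zero (hx : BFA T x) (φ : R ⊕ C → ℝ) :
    coboundary φ ⬝ᵥ (x - T.val) = 0 := by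
  have hrow : ∀ i, ∑ j, (x - T.val) (i, j) = 0 := fun i => by
    simp only [Pi.sub_apply, Finset.sum_sub_distrib, hx.2.2.1 i, sub_self]
  have hcol : ∀ j, ∑ i, (x - T.val) (i, j) = 0 := fun j => by
    simp only [Pi.sub_apply, Finset.sum_sub_distrib, hx.2.2.2 j, sub_self]
  simp only [dotProduct, coboundary, sub_mul, Finset.sum_sub_distrib]
  rw [Fintype.sum_prod_type, Fintype.sum_prod_type_right]
  simp only [← Finset.mul_sum, hrow, hcol, mul_zero, Finset.sum_const_zero, sub_self]

lemma BFA.coboundary_mul_sub_nonneg (hx : BFA T x) {φ : R ⊕ C → ℝ}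
    (hφ : ∀ v w, MStep T T.sup v w → φ w ≤ φ v) (e : R × C) :
    0 ≤ coboundary φ e * (x e - T.val e) := by
  by_cases he : e ∈ T.sup
  · obtain ⟨hlo, hhi⟩ := hx.2.1 e he
    have down : T.val e < T.hi e → φ (Sum.inr e.2) ≤ φ (Sum.inl e.1) :=
      fun h => hφ _ _ ⟨e, he, Or.inl ⟨h, rfl, rfl⟩⟩
    have up : T.lo e < T.val e → φ (Sum.inl e.1) ≤ φ (Sum.inr e.2) :=
      fun h => hφ _ _ ⟨e, he, Or.inr ⟨h, rfl, rfl⟩⟩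
    unfold coboundary
    rcases (T.lo_le e).eq_or_lt with hl | hl
    · have := down (hl ▸ T.lo_lt_hi e)
      exact mul_nonneg (by linarith) (by linarith)
    rcases (T.le_hi e).lt_or_eq with hh | hh
    · rw [le_antisymm (down hh) (up hl), sub_self, zero_mul]
    · exact mul_nonneg_of_nonpos_of_nonpos (by linarith [up hl]) (by linarith)
  · rw [hx.1 e he, sub_self, mul_zero]

lemma BFA.eq_val_of_coboundary_ne_zero (hx : BFA T x) {φ : R ⊕ C → ℝ}
    (hφ : ∀ v w, MStep T T.sup v w → φ w ≤ φ v) {e : R × C} (he : coboundary φ e ≠ 0) :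
    x e = T.val e := by
  have hterm := (Finset.sum_eq_zero_iff_of_nonneg fun f _ => hx.coboundary_mul_sub_nonneg hφ f).1
    (hx.coboundary_dotProduct_sub_eq_zero φ) e (Finset.mem_univ e)
  exact sub_eq_zero.1 ((mul_eq_zero.1 hterm).resolve_left he)

lemma BFA.eq_val_of_cut (hx : BFA T x) {U : Set (R ⊕ C)}
    (hU : ∀ v w, MStep T T.sup v w → w ∈ U → v ∈ U) {e : R × C}
    (he : ¬ (Sum.inl e.1 ∈ U ↔ Sum.inr e.2 ∈ U)) : x e = T.val e := by
  refine hx.eq_val_of_coboundary_ne_zero (φ := U.indicator 1) (fun v w hvw => ?_) ?_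
  · by_cases hw : w ∈ U
    · simp [hw, hU v w hvw hw]
    · simp only [Set.indicator_of_notMem hw]
      exact Set.indicator_nonneg (fun _ _ => zero_le_one) v
  · by_cases h₁ : Sum.inl e.1 ∈ U <;> by_cases h₂ : Sum.inr e.2 ∈ U <;>
      simp_all [coboundary]

lemma BFA.eq_val_of_not_mutReach (hx : BFA T x) {e : R × C}
    (he : ¬ MutReach T T.sup (Sum.inl e.1) (Sum.inr e.2)) : x e = T.val e := by
  rcases not_and_or.1 he with h | h
  · exact hx.eq_val_of_cut (U := {v | MReach T T.sup v (Sum.inr e.2)})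
      (fun _ _ hvw hw => .head hvw hw) (fun hiff => h (hiff.2 .refl))
  · exact hx.eq_val_of_cut (U := {v | MReach T T.sup v (Sum.inl e.1)})
      (fun _ _ hvw hw => .head hvw hw) (fun hiff => h (hiff.1 .refl))

end Cuts

section Protection

variable {ι : Type*}

lemma DependsOnlyOn.mono {F : (ι → ℝ) → ℝ} {S S' : Set ι} (hF : DependsOnlyOn F S)
    (hSS' : S ⊆ S') : DependsOnlyOn F S' :=
  fun x y hxy => hF x y fun e he => hxy e (hSS' he)

variable [Fintype ι]

lemma entire_dotProduct (c : ι → ℝ) : Entire (c ⬝ᵥ ·) :=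
  ⟨_, 0, (LinearMap.toContinuousLinearMap (dotProductBilin ℝ ℝ c)).hasFPowerSeriesOnBall 0⟩

lemma isEA_dotProduct (c : ι → ℝ) : IsEA (c ⬝ᵥ ·) (Function.support c) := by
  refine ⟨fun x y hxy => Finset.sum_congr rfl fun e _ => ?_, fun S' hS' e he => ?_⟩
  · by_cases hc : c e = 0
    · simp [hc]
    · rw [hxy e hc]
  · classical
    by_contra heS'
    have h := hS' 0 (Pi.single e 1) fun f hf => by
      rw [Pi.single_eq_of_ne (ne_of_mem_of_not_mem hf heS'), Pi.zero_apply]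
    simp only [dotProduct_zero, dotProduct_single, mul_one] at h
    exact he h.symm

variable [Fintype R] [Fintype C] {T : Table R C} {Q : Set (R × C)}

lemma TotallyProtected.eq_zero_of_dotProduct_eq (hT : TotallyProtected T Q) {c : R × C → ℝ}
    (hcQ : Function.support c ⊆ Q) (hcE : Function.support c ⊆ T.sup)
    (hc : ∀ x, BFA T x → c ⬝ᵥ x = c ⬝ᵥ T.val) : c = 0 := by
  by_contra hne
  exact hT ⟨(c ⬝ᵥ ·), _, entire_dotProduct c, (isEA_dotProduct c).1.mono hcE,
    fun x y hx hy => (hc x hx).trans (hc y hy).symm, isEA_dotProduct c, hcQ,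
    Function.support_nonempty_iff.2 hne⟩

end Protection

section Suppression

variable [Fintype R] [Fintype C] {T : Table R C} {P : Set (R × C)} {x : R × C → ℝ}

omit [Fintype R] [Fintype C] in
lemma Table.addSup_val : (T.addSup P).val = T.val := rfl

lemma TotallyProtected.mutReach_of_mem (hTP : TotallyProtected (T.addSup P) T.sup)
    {e : R × C} (he : e ∈ T.sup) : MutReach T (T.sup ∪ P) (Sum.inl e.1) (Sum.inr e.2) := by
  classical
  by_contra h
  have hsupp : Function.support (Pi.single e (1 : ℝ)) ⊆ T.sup := by
    rw [Pi.support_single_of_ne one_ne_zero]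
    exact Set.singleton_subset_iff.2 he
  have hzero := hTP.eq_zero_of_dotProduct_eq hsupp (hsupp.trans Set.subset_union_left)
    fun x hx => by rw [single_dotProduct, single_dotProduct, hx.eq_val_of_not_mutReach h]
  simpa using congrFun hzero e

lemma BFA.coboundary_mul_sub_eq_zero (hx : BFA (T.addSup P) x) {φ : R ⊕ C → ℝ}
    (hφ : ∀ f ∈ cyclicEdges T T.sup P, coboundary φ f = 0) {f : R × C} (hf : f ∉ T.sup) :
    coboundary φ f * (x f - T.val f) = 0 := by
  by_cases hfP' : f ∈ cyclicEdges T T.sup P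
  · rw [hφ f hfP', zero_mul]
  by_cases hfP : f ∈ P
  · rw [hx.eq_val_of_not_mutReach fun h => hfP' ⟨hfP, h⟩, Table.addSup_val, sub_self, mul_zero]
  · rw [hx.1 f (by rintro (h | h) <;> contradiction), Table.addSup_val, sub_self, mul_zero]

lemma TotallyProtected.conn_cyclicEdges_of_mem (hTP : TotallyProtected (T.addSup P) T.sup)
    {e : R × C} (he : e ∈ T.sup) : Conn (cyclicEdges T T.sup P) (Sum.inl e.1) (Sum.inr e.2) := by
  by_contra h
  set U := {v | Conn (cyclicEdges T T.sup P) (Sum.inl e.1) v}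
  have hU : ∀ f ∈ cyclicEdges T T.sup P, coboundary (U.indicator 1) f = 0 := by
    intro f hf
    have : Sum.inl f.1 ∈ U ↔ Sum.inr f.2 ∈ U :=
      ⟨fun h => h.tail ⟨f, hf, Or.inl ⟨rfl, rfl⟩⟩, fun h => h.tail ⟨f, hf, Or.inr ⟨rfl, rfl⟩⟩⟩
    by_cases h₁ : Sum.inl f.1 ∈ U <;> simp_all [coboundary]
  have hzero := hTP.eq_zero_of_dotProduct_eq (c := T.sup.indicator (coboundary (U.indicator 1)))
    Set.support_indicator_subset
    (Set.support_indicator_subset.trans Set.subset_union_left) fun x hx => by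
      rw [← sub_eq_zero, ← dotProduct_sub, ← hx.coboundary_dotProduct_sub_eq_zero (U.indicator 1)]
      refine Finset.sum_congr rfl fun f _ => ?_
      by_cases hf : f ∈ T.sup
      · rw [Set.indicator_of_mem hf]
      · rw [Set.indicator_of_notMem hf, zero_mul, Pi.sub_apply, Table.addSup_val,
          hx.coboundary_mul_sub_eq_zero hU hf]
  have hce := congrFun hzero e
  simp only [Set.indicator_of_mem he, coboundary, Pi.zero_apply] at hce
  simp [U, h] at hce
  exact hce .refl

end Suppression

theorem stmt10_general [Fintype R] [Fintype C]
    (T : Table R C) (P : Set (R × C))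
    (hTP : TotallyProtected (T.addSup P) T.sup)
    (P' : Set (R × C))
    (hP' : P' = {e | e ∈ P ∧ MutReach T (T.sup ∪ P) (Sum.inl e.1) (Sum.inr e.2)}) :
    (∀ D : Set (R ⊕ C), IsCC (T.sup ∪ P') D →
      ∀ v ∈ D, ∀ w ∈ D, MutReach T (T.sup ∪ P') v w) ∧
    (∀ D : Set (R ⊕ C), IsCC T.sup D → ∀ v ∈ D, ∀ w ∈ D, Conn P' v w) ∧
    P'.ncard ≤ P.ncard := by
  change P' = cyclicEdges T T.sup P at hP'
  subst hP'
  refine ⟨fun D hD v hv w hw => ?_, fun D hD v hv w hw => ?_,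
    Set.ncard_le_ncard (fun e he => he.1) P.toFinite⟩
  · refine MutReach.union_cyclicEdges ((hD.conn hv hw).rel_of_forall (mutReach_equivalence T _) ?_)
    rintro e (he | he)
    · exact hTP.mutReach_of_mem he
    · exact he.2
  · exact (hD.conn hv hw).rel_of_forall (conn_equivalence _)
      fun e he => hTP.conn_cyclicEdges_of_mem he

/-- If `E` is totally protected after also suppressing `P`, then the subset `P'` of
`P` consisting of the edges whose endpoints are mutually reachable in the mixed graph
with edge set `E ∪ P` satisfies Properties N1 and N2, and `|P'| ≤ |P|`. -/
theorem stmt10 [Fintype R] [Fintype C] [Nonempty R] [Nonempty C]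
    (T : Table R C) (P : Set (R × C)) (hP : ∀ e ∈ P, e ∉ T.sup)
    (hTP : TotallyProtected (T.addSup P) T.sup)
    (P' : Set (R × C))
    (hP' : P' = {e | e ∈ P ∧ MutReach T (T.sup ∪ P) (Sum.inl e.1) (Sum.inr e.2)}) :
    (∀ D : Set (R ⊕ C), IsCC (T.sup ∪ P') D →
      ∀ v ∈ D, ∀ w ∈ D, MutReach T (T.sup ∪ P') v w) ∧
    (∀ D : Set (R ⊕ C), IsCC T.sup D → ∀ v ∈ D, ∀ w ∈ D, Conn P' v w) ∧
    P'.ncard ≤ P.ncard :=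
  stmt10_general T P hTP P' hP'
end
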